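/- arXiv:1910.01527 — 11 statements merged into one kernel-verified Lean document; each statement's English description precedes it below -/
import Mathlib

section
/- Assume the Continuum Hypothesis (𝔠 = ℵ₁). Let X be a weakly Lindelöf determined (WLD) real Banach space whose density character equals ℵ₁. Then there exists a dense linear subspace Y of X that contains no uncountable biorthogonal system: every biorthogonal system {(y_λ, g_λ)}_{λ∈Λ} in Y has countable index set Λ. -/
open Cardinal Ordinal TopologicalSpace

universe u v

/-- The *density character* of a topological space: the least cardinality of a dense subset. -/
noncomputable def densityChar (X : Type u) [TopologicalSpace X] : Cardinal.{u} :=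
  sInf {c : Cardinal.{u} | ∃ s : Set X, Dense s ∧ Cardinal.mk s = c}

/-- A family `{(e γ, f γ)}` is *biorthogonal* if `f α (e β) = δ_{αβ}`. -/
def IsBiorthogonal {X : Type*} [NormedAddCommGroup X] [NormedSpace ℝ X]
    {Γ : Type*} (e : Γ → X) (f : Γ → X →L[ℝ] ℝ) : Prop :=
  (∀ α, f α (e α) = 1) ∧ ∀ α β, α ≠ β → f α (e β) = 0

/-- A biorthogonal family is a *Markushevich basis* (M-basis) for `X` if the linear span
of the vectors is dense and the functionals separate the points of `X`. -/
def IsMBasis {X : Type*} [NormedAddCommGroup X] [NormedSpace ℝ X]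
    {Γ : Type*} (e : Γ → X) (f : Γ → X →L[ℝ] ℝ) : Prop :=
  IsBiorthogonal e f ∧ Dense (Submodule.span ℝ (Set.range e) : Set X) ∧
    ∀ x : X, (∀ γ, f γ x = 0) → x = 0

/-- An M-basis *countably supports* `X*` if every continuous functional has countable
support with respect to the basis vectors. -/
def CountablySupports {X : Type*} [NormedAddCommGroup X] [NormedSpace ℝ X]
    {Γ : Type*} (e : Γ → X) : Prop :=
  ∀ φ : X →L[ℝ] ℝ, {γ | φ (e γ) ≠ 0}.Countable

/-- A normed space is *weakly Lindelöf determined* (WLD) if it admits an M-basis that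
countably supports the dual. -/
def IsWLD (X : Type u) [NormedAddCommGroup X] [NormedSpace ℝ X] : Prop :=
  ∃ (Γ : Type u) (e : Γ → X) (f : Γ → X →L[ℝ] ℝ), IsMBasis e f ∧ CountablySupports e

/-- Two normed spaces are *densely isomorphic* if they contain dense linear subspaces that
are isomorphic via a continuous linear bijection with continuous inverse. -/
def DenselyIsomorphic (X : Type*) (Y : Type*) [NormedAddCommGroup X] [NormedSpace ℝ X]
    [NormedAddCommGroup Y] [NormedSpace ℝ Y] : Prop :=
  ∃ (X₀ : Submodule ℝ X) (Y₀ : Submodule ℝ Y),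
    Dense (X₀ : Set X) ∧ Dense (Y₀ : Set Y) ∧ Nonempty (X₀ ≃L[ℝ] Y₀)

/-- A cardinal `Γ` is *strongly `ω₁`-inaccessible* (`ω₁ ⋘ Γ`) if `α ^ ℵ₀ < Γ`
for every cardinal `α < Γ`. -/
def StronglyOmega1Inaccessible (Γ : Cardinal.{u}) : Prop :=
  ∀ α : Cardinal.{u}, α < Γ → α ^ Cardinal.aleph0.{u} < Γ

section Aux

open Set Submodule

variable {X : Type u} [NormedAddCommGroup X] [NormedSpace ℝ X]

lemma aux_aleph1_pow_aleph0 (hCH : Cardinal.continuum.{u} = Cardinal.aleph 1) :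
    (Cardinal.aleph 1 : Cardinal.{u}) ^ Cardinal.aleph0.{u} = Cardinal.aleph 1 := by
  rw [← hCH, ← Cardinal.two_power_aleph0, ← Cardinal.power_mul, Cardinal.aleph0_mul_aleph0]

lemma aux_mk_le_aleph1 (hCH : Cardinal.continuum.{u} = Cardinal.aleph 1)
    {s : Set X} (hs : Dense s) (hcard : #s ≤ Cardinal.aleph 1) :
    Cardinal.mk X ≤ Cardinal.aleph 1 := by
  classical
  by_cases hne : Nonempty X
  · haveI := hne
    have hsne : Nonempty s := by
      rcases hne with ⟨x⟩
      rcases Metric.mem_closure_iff.1 (hs x) 1 one_pos with ⟨b, hb, -⟩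
      exact ⟨⟨b, hb⟩⟩
    set F : (ULift.{u} ℕ → s) → X := fun f =>
      if h : ∃ x : X, Filter.Tendsto (fun n : ℕ => ((f ⟨n⟩ : s) : X)) Filter.atTop (nhds x)
      then h.choose else (Classical.arbitrary X)
    have hF : Function.Surjective F := by
      intro x
      obtain ⟨g, hg, hgx⟩ := mem_closure_iff_seq_limit.1 (hs x)
      refine ⟨fun n => ⟨g n.down, hg n.down⟩, ?_⟩
      have hex : ∃ y : X, Filter.Tendsto (fun n : ℕ => g n) Filter.atTop (nhds y) := ⟨x, hgx⟩
      simp only [F, dif_pos hex]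
      exact tendsto_nhds_unique hex.choose_spec hgx
    calc #X ≤ #(ULift.{u} ℕ → s) := Cardinal.mk_le_of_surjective hF
      _ = #s ^ #(ULift.{u} ℕ) := (Cardinal.power_def _ _).symm
      _ = #s ^ Cardinal.aleph0.{u} := by rw [Cardinal.mk_uLift, Cardinal.mk_nat, Cardinal.lift_aleph0]
      _ ≤ (Cardinal.aleph 1) ^ Cardinal.aleph0.{u} := by
          exact Cardinal.power_le_power_right hcard
      _ = Cardinal.aleph 1 := aux_aleph1_pow_aleph0 hCH
  · haveI : IsEmpty X := not_nonempty_iff.1 hne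
    simp [Cardinal.mk_eq_zero X]

end Aux

section Aux2
open Set Submodule
set_option linter.unusedSectionVars false

variable {X : Type u} [NormedAddCommGroup X] [NormedSpace ℝ X]

lemma aux_mk_dual_le (hCH : Cardinal.continuum.{u} = Cardinal.aleph 1)
    (hWLD : IsWLD X) (hX : #X ≤ Cardinal.aleph 1) :
    #(X →L[ℝ] ℝ) ≤ Cardinal.aleph 1 := by
  classical
  obtain ⟨Γ, e, f, ⟨⟨hb1, hb2⟩, hdense, _⟩, hcs⟩ := hWLD
  have he : Function.Injective e := by
    intro a b hab
    by_contra hne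
    have h0 := hb2 a b hne
    rw [← hab, hb1 a] at h0
    exact one_ne_zero h0
  have hΓ : #Γ ≤ Cardinal.aleph 1 := (Cardinal.mk_le_of_injective he).trans hX
  -- the coding map
  set code : (X →L[ℝ] ℝ) → (ULift.{u} ℕ → Option (Γ × ℝ)) := fun φ =>
    if h : {γ | φ (e γ) ≠ 0}.Nonempty then
      fun n => some ((((hcs φ).exists_eq_range h).choose n.down),
        φ (e (((hcs φ).exists_eq_range h).choose n.down)))
    else fun _ => none
  -- injective on values at basis vectors
  have hval : ∀ φ₁ φ₂ : X →L[ℝ] ℝ, code φ₁ = code φ₂ → ∀ γ, φ₁ (e γ) = φ₂ (e γ) := by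
    intro φ₁ φ₂ hcode γ
    by_cases h1 : {γ | φ₁ (e γ) ≠ 0}.Nonempty
    · by_cases h2 : {γ | φ₂ (e γ) ≠ 0}.Nonempty
      · set u₁ := (((hcs φ₁).exists_eq_range h1).choose) with hu₁
        set u₂ := (((hcs φ₂).exists_eq_range h2).choose) with hu₂
        have hs₁ : {γ | φ₁ (e γ) ≠ 0} = Set.range u₁ := ((hcs φ₁).exists_eq_range h1).choose_spec
        have hs₂ : {γ | φ₂ (e γ) ≠ 0} = Set.range u₂ := ((hcs φ₂).exists_eq_range h2).choose_spec
        have hps : ∀ n : ℕ, u₁ n = u₂ n ∧ φ₁ (e (u₁ n)) = φ₂ (e (u₂ n)) := by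
          intro n
          have := congrFun hcode ⟨n⟩
          simp only [code, dif_pos h1, dif_pos h2, Option.some.injEq, Prod.mk.injEq] at this
          exact this
        by_cases hγ : φ₁ (e γ) ≠ 0
        · have : γ ∈ Set.range u₁ := hs₁ ▸ hγ
          obtain ⟨n, rfl⟩ := this
          rw [(hps n).2, (hps n).1]
        · push_neg at hγ
          by_cases hγ2 : φ₂ (e γ) ≠ 0
          · have : γ ∈ Set.range u₂ := hs₂ ▸ hγ2
            obtain ⟨n, rfl⟩ := this
            have h12 := (hps n).2
            rw [(hps n).1] at h12
            exact h12
          · push_neg at hγ2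
            rw [hγ, hγ2]
      · exfalso
        have := congrFun hcode ⟨0⟩
        simp only [code, dif_pos h1, dif_neg h2] at this
        exact Option.some_ne_none _ this
    · by_cases h2 : {γ | φ₂ (e γ) ≠ 0}.Nonempty
      · exfalso
        have := congrFun hcode ⟨0⟩
        simp only [code, dif_neg h1, dif_pos h2] at this
        exact Option.some_ne_none _ this.symm
      · rw [Set.not_nonempty_iff_eq_empty] at h1 h2
        have e1 : φ₁ (e γ) = 0 := by
          by_contra h
          exact absurd (Set.eq_empty_iff_forall_notMem.1 h1 γ) (by simpa using h)
        have e2 : φ₂ (e γ) = 0 := by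
          by_contra h
          exact absurd (Set.eq_empty_iff_forall_notMem.1 h2 γ) (by simpa using h)
        rw [e1, e2]
  have hinj : Function.Injective code := by
    intro φ₁ φ₂ hcode
    have hspan : ∀ x ∈ Submodule.span ℝ (Set.range e), φ₁ x = φ₂ x := by
      intro x hx
      induction hx using Submodule.span_induction with
      | mem x h => obtain ⟨γ, rfl⟩ := h; exact hval φ₁ φ₂ hcode γ
      | zero => simp
      | add x y _ _ hx hy => simp [hx, hy]
      | smul a x _ hx => simp [hx]
    have := Continuous.ext_on hdense φ₁.continuous φ₂.continuous (fun x hx => hspan x hx)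
    exact ContinuousLinearMap.coe_injective (by ext x; exact congrFun this x)
  calc #(X →L[ℝ] ℝ) ≤ #(ULift.{u} ℕ → Option (Γ × ℝ)) := Cardinal.mk_le_of_injective hinj
    _ = #(Option (Γ × ℝ)) ^ Cardinal.aleph0.{u} := by
        rw [← Cardinal.power_def, Cardinal.mk_uLift, Cardinal.mk_nat, Cardinal.lift_aleph0]
    _ ≤ (Cardinal.aleph 1) ^ Cardinal.aleph0.{u} := by
        refine Cardinal.power_le_power_right ?_
        have h1 : #(Γ × ℝ) ≤ Cardinal.aleph 1 := by
          rw [Cardinal.mk_prod]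
          have : Cardinal.lift.{0} #Γ ≤ Cardinal.aleph 1 := by
            rwa [Cardinal.lift_uzero]
          have h2 : Cardinal.lift.{u} #ℝ ≤ Cardinal.aleph 1 := by
            rw [Cardinal.mk_real, Cardinal.lift_continuum, hCH]
          calc Cardinal.lift.{0} #Γ * Cardinal.lift.{u} #ℝ
              ≤ Cardinal.aleph 1 * Cardinal.aleph 1 := mul_le_mul' this h2
            _ = Cardinal.aleph 1 := Cardinal.mul_eq_self (Cardinal.aleph0_le_aleph 1)
        rw [Cardinal.mk_option]
        calc #(Γ × ℝ) + 1 ≤ Cardinal.aleph 1 + Cardinal.aleph 1 := by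
              refine add_le_add h1 ?_
              exact le_trans (by norm_num) (Cardinal.aleph0_le_aleph 1)
          _ = Cardinal.aleph 1 := Cardinal.add_eq_self (Cardinal.aleph0_le_aleph 1)
    _ = Cardinal.aleph 1 := aux_aleph1_pow_aleph0 hCH

end Aux2



section Aux3
open Set Submodule
set_option linter.unusedSectionVars false

variable {X : Type u} [NormedAddCommGroup X] [NormedSpace ℝ X]

/-- The predicate for the "generic avoidance" functional. -/
def SelPred {I : Type u} (φ : I → (X →L[ℝ] ℝ)) (B Z : Finset I) (w : I → X)
    (ψ : X →L[ℝ] ℝ) : Prop :=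
  ψ ∈ Submodule.span ℝ (φ '' ↑B) ∧ (∀ z ∈ Z, ψ (w z) = 0) ∧ ψ ≠ 0

noncomputable def sel {I : Type u} (φ : I → (X →L[ℝ] ℝ)) (B Z : Finset I) (w : I → X) :
    X →L[ℝ] ℝ :=
  open Classical in
  if h : ∃ ψ, SelPred φ B Z w ψ then h.choose else 0

lemma sel_spec {I : Type u} (φ : I → (X →L[ℝ] ℝ)) (B Z : Finset I) (w : I → X)
    (h : ∃ ψ, SelPred φ B Z w ψ) : SelPred φ B Z w (sel φ B Z w) := by
  classical
  rw [sel]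
  rw [dif_pos h]
  exact h.choose_spec

lemma sel_congr {I : Type u} (φ : I → (X →L[ℝ] ℝ)) (B Z : Finset I) {w w' : I → X}
    (h : ∀ z ∈ Z, w z = w' z) : sel φ B Z w = sel φ B Z w' := by
  have hpred : SelPred φ B Z w = SelPred φ B Z w' := by
    funext ψ
    unfold SelPred
    apply propext
    constructor
    · rintro ⟨h1, h2, h3⟩
      exact ⟨h1, fun z hz => by rw [← h z hz]; exact h2 z hz, h3⟩
    · rintro ⟨h1, h2, h3⟩
      exact ⟨h1, fun z hz => by rw [h z hz]; exact h2 z hz, h3⟩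
  unfold sel
  rw [hpred]

lemma baire_pick [CompleteSpace X] {J : Type w} [Countable J] (ψ : J → (X →L[ℝ] ℝ))
    (hψ : ∀ j, ψ j ≠ 0) (c : X) {r : ℝ} (hr : 0 < r) :
    ∃ x : X, dist x c < r ∧ ∀ j, ψ j x ≠ 0 := by
  have hden : ∀ j, Dense {x : X | ψ j x ≠ 0} := by
    intro j
    have hker : {x : X | ψ j x = 0} = (LinearMap.ker (ψ j : X →ₗ[ℝ] ℝ) : Set X) := by
      ext x; simp [LinearMap.mem_ker]
    have hint : interior ((LinearMap.ker (ψ j : X →ₗ[ℝ] ℝ) : Set X)) = ∅ := by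
      by_contra h
      have hne : (interior ((LinearMap.ker (ψ j : X →ₗ[ℝ] ℝ) : Set X))).Nonempty :=
        Set.nonempty_iff_ne_empty.2 h
      have : (LinearMap.ker (ψ j : X →ₗ[ℝ] ℝ) : Submodule ℝ X) = ⊤ :=
        Submodule.eq_top_of_nonempty_interior' _ hne
      have h0 := LinearMap.ker_eq_top.1 this
      exact hψ j (ContinuousLinearMap.coe_injective
        (h0.trans (ContinuousLinearMap.coe_zero).symm))
    have := interior_eq_empty_iff_dense_compl.1 hint
    have hcompl : ((LinearMap.ker (ψ j : X →ₗ[ℝ] ℝ) : Set X))ᶜ = {x : X | ψ j x ≠ 0} := by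
      ext x; simp [LinearMap.mem_ker]
    rwa [hcompl] at this
  have hopen : ∀ j, IsOpen {x : X | ψ j x ≠ 0} := by
    intro j
    have : {x : X | ψ j x ≠ 0} = ((LinearMap.ker (ψ j : X →ₗ[ℝ] ℝ) : Set X))ᶜ := by
      ext x; simp [LinearMap.mem_ker]
    rw [this]
    exact (ContinuousLinearMap.isClosed_ker (ψ j)).isOpen_compl
  have hd : Dense (⋂ j, {x : X | ψ j x ≠ 0}) := dense_iInter_of_isOpen hopen hden
  obtain ⟨x, hx⟩ := hd.inter_open_nonempty (Metric.ball c r) Metric.isOpen_ball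
    (Metric.nonempty_ball.2 hr)
  refine ⟨x, Metric.mem_ball.1 hx.1, fun j => ?_⟩
  exact Set.mem_iInter.1 hx.2 j

lemma Iio_countable_aux (i : (Cardinal.aleph 1 : Cardinal.{u}).ord.ToType) :
    (Set.Iio i).Countable := by
  have h := Cardinal.mk_Iio_ord_toType i
  rw [← Cardinal.countable_iff_lt_aleph_one] at h
  exact h

lemma exists_gt_of_countable_aux {S : Set ((Cardinal.aleph 1 : Cardinal.{u}).ord.ToType)}
    (hS : S.Countable) : ∃ δ, ∀ x ∈ S, x < δ := by
  by_contra hcon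
  push_neg at hcon
  have hcover : (Set.univ : Set ((Cardinal.aleph 1 : Cardinal.{u}).ord.ToType)) ⊆
      ⋃ x ∈ S, Set.Iic x := by
    intro δ _
    obtain ⟨x, hxS, hx⟩ := hcon δ
    exact Set.mem_biUnion hxS hx
  have hcnt : (⋃ x ∈ S, Set.Iic x).Countable := by
    refine hS.biUnion fun x _ => ?_
    have : Set.Iic x = insert x (Set.Iio x) := by
      rw [Set.Iio_insert]
    rw [this]
    exact (Iio_countable_aux x).insert x
  have : (Set.univ : Set ((Cardinal.aleph 1 : Cardinal.{u}).ord.ToType)).Countable :=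
    hcnt.mono hcover
  rw [Set.countable_univ_iff, ← Cardinal.mk_le_aleph0_iff] at this
  rw [Cardinal.mk_ord_toType] at this
  exact absurd (lt_of_lt_of_le Cardinal.aleph0_lt_aleph_one this) (lt_irrefl _)

end Aux3

/-- (CH) Every WLD Banach space of density character `ℵ₁` contains a dense
linear subspace with no uncountable biorthogonal system. -/
theorem statement2 {X : Type u} [NormedAddCommGroup X] [NormedSpace ℝ X] [CompleteSpace X]
    (hCH : Cardinal.continuum.{u} = Cardinal.aleph 1)
    (hWLD : IsWLD X) (hdens : densityChar X = Cardinal.aleph 1) :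
    ∃ Y : Submodule ℝ X, Dense (Y : Set X) ∧
      ∀ (Λ : Type v) (y : Λ → Y) (g : Λ → Y →L[ℝ] ℝ),
        IsBiorthogonal y g → Countable Λ := by
  classical
  -- a dense set of cardinality ℵ₁
  have hne : {c : Cardinal.{u} | ∃ s : Set X, Dense s ∧ Cardinal.mk s = c}.Nonempty :=
    ⟨#(Set.univ : Set X), Set.univ, dense_univ, rfl⟩
  have hmem : densityChar X ∈ {c : Cardinal.{u} | ∃ s : Set X, Dense s ∧ Cardinal.mk s = c} :=
    csInf_mem hne
  rw [hdens] at hmem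
  obtain ⟨s, hsdense, hscard⟩ := hmem
  have hXcard : #X ≤ Cardinal.aleph 1 := aux_mk_le_aleph1 hCH hsdense (le_of_eq hscard)
  have hdual : #(X →L[ℝ] ℝ) ≤ Cardinal.aleph 1 := aux_mk_dual_le hCH hWLD hXcard
  set I := (Cardinal.aleph 1 : Cardinal.{u}).ord.ToType with hIdef
  have hmkI : #I = Cardinal.aleph 1 := Cardinal.mk_ord_toType _
  -- surjective enumeration of the dual
  haveI : Nonempty (X →L[ℝ] ℝ) := ⟨0⟩
  obtain ⟨j⟩ := (Cardinal.le_def _ _).1 (hdual.trans_eq hmkI.symm)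
  set φe : I → (X →L[ℝ] ℝ) := Function.invFun j with hφedef
  have hφsurj : Function.Surjective φe := Function.invFun_surjective j.injective
  -- enumeration of s × ℕ for density control
  have hmkprod : #(↥s × ℕ) = Cardinal.aleph 1 := by
    rw [Cardinal.mk_prod, Cardinal.lift_uzero, Cardinal.mk_nat, Cardinal.lift_aleph0, hscard,
      Cardinal.mul_eq_max (Cardinal.aleph0_le_aleph 1) le_rfl]
    exact max_eq_left (Cardinal.aleph0_le_aleph 1)
  obtain ⟨eqv⟩ := Cardinal.eq.1 (hmkI.trans hmkprod.symm)
  set d : I → X := fun i => ((eqv i).1 : X) with hddef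
  set ε : I → ℝ := fun i => (1/2 : ℝ) ^ ((eqv i).2) with hεdef
  have hεpos : ∀ i, 0 < ε i := fun i => by
    simp only [hεdef]
    positivity
  -- the stage-existence via Baire category
  have stage_ex : ∀ (i : I) (p : I → X), ∃ x : X, dist x (d i) < ε i ∧
      ∀ B Z : Finset I, ↑B ⊆ Set.Iio i → ↑Z ⊆ Set.Iio i →
        sel φe B Z p ≠ 0 → sel φe B Z p x ≠ 0 := by
    intro i p
    set J : Set (Finset I × Finset I) :=
      {q | ↑q.1 ⊆ Set.Iio i ∧ ↑q.2 ⊆ Set.Iio i ∧ sel φe q.1 q.2 p ≠ 0} with hJdef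
    have hJc : J.Countable := by
      have h0 := Set.countable_setOf_finite_subset (Iio_countable_aux i)
      have hsub : J ⊆ (fun q : Finset I × Finset I => ((q.1 : Set I), (q.2 : Set I))) ⁻¹'
          ({t | t.Finite ∧ t ⊆ Set.Iio i} ×ˢ {t | t.Finite ∧ t ⊆ Set.Iio i}) := by
        rintro ⟨B, Z⟩ ⟨h1, h2, -⟩
        exact ⟨⟨B.finite_toSet, h1⟩, ⟨Z.finite_toSet, h2⟩⟩
      refine Set.Countable.mono hsub ?_
      refine Set.Countable.preimage_of_injOn (h0.prod h0) ?_
      intro q hq q' hq' hh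
      have h1 := congrArg Prod.fst hh
      have h2 := congrArg Prod.snd hh
      simp only at h1 h2
      exact Prod.ext (Finset.coe_injective h1) (Finset.coe_injective h2)
    haveI := hJc.to_subtype
    obtain ⟨x, hx1, hx2⟩ := baire_pick (fun q : J => sel φe q.1.1 q.1.2 p)
      (fun q => q.2.2.2) (d i) (hεpos i)
    exact ⟨x, hx1, fun B Z hB hZ hne0 => hx2 ⟨(B, Z), hB, hZ, hne0⟩⟩
  -- transfinite recursion
  have wf : WellFounded ((· < ·) : I → I → Prop) := IsWellFounded.wf
  set w : I → X := WellFounded.fix wf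
    (fun i rec => (stage_ex i (fun jj => if h : jj < i then rec jj h else 0)).choose) with hwdef
  have hw : ∀ i, w i = (stage_ex i (fun jj => if h : jj < i then w jj else 0)).choose := by
    intro i
    rw [hwdef]
    exact WellFounded.fix_eq wf _ i
  have hGood : ∀ i : I, dist (w i) (d i) < ε i ∧ ∀ B Z : Finset I,
      ↑B ⊆ Set.Iio i → ↑Z ⊆ Set.Iio i → sel φe B Z w ≠ 0 → sel φe B Z w (w i) ≠ 0 := by
    intro i
    have hmask : ∀ (B Z : Finset I), ↑Z ⊆ Set.Iio i →
        sel φe B Z (fun jj => if h : jj < i then w jj else 0) = sel φe B Z w := by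
      intro B Z hZ
      refine sel_congr φe B Z fun z hz => ?_
      rw [dif_pos (show z < i from hZ hz)]
    obtain ⟨h1, h2⟩ := (stage_ex i (fun jj => if h : jj < i then w jj else 0)).choose_spec
    constructor
    · rw [hw i]; exact h1
    · intro B Z hB hZ hne0
      have := h2 B Z hB hZ (by rw [hmask B Z hZ]; exact hne0)
      rw [hmask B Z hZ] at this
      rw [hw i]
      exact this
  -- the subspace
  refine ⟨Submodule.span ℝ (Set.range w), ?_, ?_⟩
  · -- density
    have hsub : s ⊆ closure ((Submodule.span ℝ (Set.range w) : Submodule ℝ X) : Set X) := by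
      intro p hp
      refine Metric.mem_closure_iff.2 fun r hr => ?_
      obtain ⟨n, hn⟩ := exists_pow_lt_of_lt_one hr (by norm_num : (1/2 : ℝ) < 1)
      set i := eqv.symm (⟨p, hp⟩, n) with hidef
      have hd : d i = p := by simp [hddef, hidef]
      have hε : ε i = (1/2 : ℝ) ^ n := by simp [hεdef, hidef]
      refine ⟨w i, Submodule.subset_span (Set.mem_range_self i), ?_⟩
      have := (hGood i).1
      rw [hd, hε] at this
      rw [dist_comm]
      exact lt_trans this hn
    have hdc : Dense (closure ((Submodule.span ℝ (Set.range w) : Submodule ℝ X) : Set X)) :=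
      hsdense.mono hsub
    exact dense_closure.1 hdc
  · -- no uncountable biorthogonal systems
    intro Λ y g hbio
    by_contra hΛ
    obtain ⟨hbio1, hbio2⟩ := hbio
    -- Hahn–Banach extensions of the functionals
    have hext : ∀ lam : Λ, ∃ Φ : X →L[ℝ] ℝ,
        ∀ x : (Submodule.span ℝ (Set.range w)), Φ x = g lam x := by
      intro lam
      obtain ⟨Φ, hΦ, -⟩ := exists_extension_norm_eq (Submodule.span ℝ (Set.range w)) (g lam)
      exact ⟨Φ, hΦ⟩
    set Φ : Λ → (X →L[ℝ] ℝ) := fun lam => (hext lam).choose with hΦdef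
    have hΦ : ∀ (lam : Λ) (x : (Submodule.span ℝ (Set.range w))), Φ lam x = g lam x :=
      fun lam => (hext lam).choose_spec
    have hΦy : ∀ lam κ : Λ, Φ lam ((y κ : X)) = if lam = κ then 1 else 0 := by
      intro lam κ
      rw [hΦ lam (y κ)]
      by_cases h : lam = κ
      · subst h; simp [hbio1 lam]
      · simp [h, hbio2 lam κ h]
    -- index of the extension in the enumeration
    set b : Λ → I := fun lam => (hφsurj (Φ lam)).choose with hbdef
    have hb : ∀ lam, φe (b lam) = Φ lam := fun lam => (hφsurj (Φ lam)).choose_spec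
    -- finite representations over the generators
    have hrep : ∀ lam : Λ, ∃ cc : I →₀ ℝ, (cc.sum fun i a => a • w i) = ((y lam : X)) :=
      fun lam => Finsupp.mem_span_range_iff_exists_finsupp.1 (y lam).2
    set c : Λ → (I →₀ ℝ) := fun lam => (hrep lam).choose with hcdef
    have hc : ∀ lam, ((c lam).sum fun i a => a • w i) = ((y lam : X)) :=
      fun lam => (hrep lam).choose_spec
    have hyne : ∀ lam : Λ, ((y lam : X)) ≠ 0 := by
      intro lam h0
      have h1 : y lam = 0 := by
        exact Subtype.ext h0
      have h2 := hbio1 lam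
      rw [h1, map_zero] at h2
      exact zero_ne_one h2
    -- linear independence of the vectors
    have hli : LinearIndependent ℝ (fun lam : Λ => ((y lam : X))) := by
      rw [linearIndependent_iff']
      intro t q hsum lam hlam
      have h0 := congrArg (Φ lam) hsum
      rw [map_sum, map_zero] at h0
      have h1 : ∀ i ∈ t, Φ lam (q i • ((y i : X))) = if lam = i then q i else 0 := by
        intro i _
        rw [map_smul, hΦy lam i, _root_.smul_eq_mul]
        by_cases h : lam = i <;> simp [h]
      rw [Finset.sum_congr rfl h1, Finset.sum_ite_eq t lam (fun i => q i)] at h0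
      rw [if_pos hlam] at h0
      exact h0
    -- an infinite sequence of indices
    haveI hinf : Infinite Λ := by
      rw [← not_finite_iff_infinite]
      intro hfin
      exact hΛ (Finite.to_countable)
    set u : ℕ ↪ Λ := Infinite.natEmbedding Λ with hudef
    obtain ⟨δ, hδ⟩ := exists_gt_of_countable_aux (Set.countable_range fun nn => b (u nn))
    have hδ' : ∀ nn : ℕ, b (u nn) < δ := fun nn => hδ _ (Set.mem_range_self nn)
    -- only countably many vectors are supported below δ
    set T : Set Λ := {lam | ↑(c lam).support ⊆ Set.Iio δ} with hTdef
    have hTc : T.Countable := by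
      have hmemT : ∀ lam : T, ((y (lam : Λ) : X)) ∈ Submodule.span ℝ (w '' Set.Iio δ) := by
        rintro ⟨lam, hlam⟩
        rw [← hc lam, Finsupp.sum]
        refine Submodule.sum_mem _ fun i hi => ?_
        exact Submodule.smul_mem _ _ (Submodule.subset_span ⟨i, hlam hi, rfl⟩)
      set vT : T → (Submodule.span ℝ (w '' Set.Iio δ)) :=
        fun lam => ⟨((y (lam : Λ) : X)), hmemT lam⟩ with hvTdef
      have hliT : LinearIndependent ℝ vT := by
        have h1 : LinearIndependent ℝ (fun lam : T => ((y (lam : Λ) : X))) :=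
          hli.comp (Subtype.val) Subtype.val_injective
        exact LinearIndependent.of_comp (Submodule.span ℝ (w '' Set.Iio δ)).subtype h1
      have h2 := hliT.cardinal_lift_le_rank
      have h3 : Module.rank ℝ (Submodule.span ℝ (w '' Set.Iio δ)) ≤ Cardinal.aleph0.{u} := by
        refine le_trans (rank_span_le (R := ℝ) (w '' Set.Iio δ)) ?_
        haveI : Countable (w '' Set.Iio δ) := ((Iio_countable_aux δ).image w).to_subtype
        exact Cardinal.mk_le_aleph0
      have h4 : Cardinal.lift.{u} #T ≤ Cardinal.aleph0 := by
        refine le_trans h2 ?_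
        calc Cardinal.lift.{v} (Module.rank ℝ (Submodule.span ℝ (w '' Set.Iio δ)))
            ≤ Cardinal.lift.{v} (Cardinal.aleph0.{u}) := Cardinal.lift_le.2 h3
          _ = Cardinal.aleph0 := Cardinal.lift_aleph0
      rw [Cardinal.lift_le_aleph0, Cardinal.mk_le_aleph0_iff, Set.countable_coe_iff] at h4
      exact h4
    -- choose the witness μ
    have hμ : ∃ lam : Λ, lam ∉ T ∧ ∀ nn : ℕ, u nn ≠ lam := by
      by_contra hcon
      push_neg at hcon
      have hcov : (Set.univ : Set Λ) ⊆ T ∪ Set.range (fun nn => u nn) := by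
        intro lam _
        by_cases h : lam ∈ T
        · exact Or.inl h
        · obtain ⟨nn, hnn⟩ := hcon lam h
          exact Or.inr ⟨nn, hnn⟩
      have : (Set.univ : Set Λ).Countable :=
        Set.Countable.mono hcov (hTc.union (Set.countable_range _))
      exact hΛ (Set.countable_univ_iff.1 this)
    obtain ⟨μ, hμT, hμu⟩ := hμ
    set F : Finset I := (c μ).support with hFdef
    have hFne : F.Nonempty := by
      rw [Finset.nonempty_iff_ne_empty]
      intro h0
      have hc0 : c μ = 0 := Finsupp.support_eq_empty.1 h0
      have := hc μ
      rw [hc0, Finsupp.sum_zero_index] at this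
      exact hyne μ this.symm
    set ξ : I := F.max' hFne with hξdef
    have hξmem : ξ ∈ F := F.max'_mem hFne
    have hδξ : δ ≤ ξ := by
      by_contra hlt
      push_neg at hlt
      apply hμT
      intro i hi
      exact lt_of_le_of_lt (F.le_max' i hi) hlt
    set n : ℕ := F.card with hndef
    have hn1 : 1 ≤ n := Finset.card_pos.2 hFne
    set Z : Finset I := F.erase ξ with hZdef
    have hZcard : Z.card = n - 1 := by rw [hZdef, Finset.card_erase_of_mem hξmem]
    have hZlt : ∀ z ∈ Z, z < ξ := fun z hz =>
      lt_of_le_of_ne (F.le_max' z (Finset.mem_of_mem_erase hz)) (Finset.ne_of_mem_erase hz)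
    -- the finite set of functionals
    have hbuinj : Function.Injective fun k : Fin n => b (u k) := by
      intro k k' hkk
      simp only at hkk
      have hΦeq : Φ (u k) = Φ (u k') := by rw [← hb (u k), ← hb (u k'), hkk]
      have h1 := hΦy (u k) (u k)
      rw [hΦeq, if_pos rfl] at h1
      have h2 := hΦy (u k') (u k)
      by_cases hud : u k' = u k
      · exact Fin.val_injective (u.injective hud).symm
      · rw [if_neg (fun hh => hud hh)] at h2
        rw [h2] at h1
        exact absurd h1 zero_ne_one
    set B : Finset I := Finset.image (fun k : Fin n => b (u k)) Finset.univ with hBdef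
    have hBsub : ↑B ⊆ Set.Iio ξ := by
      intro x hx
      simp only [hBdef, Finset.coe_image, Set.mem_image] at hx
      obtain ⟨k, -, rfl⟩ := hx
      exact lt_of_lt_of_le (hδ' k) hδξ
    have hZsub : ↑Z ⊆ Set.Iio ξ := fun z hz => hZlt z hz
    -- every element of span (φe '' B) kills y μ
    have hkill : ∀ ψ' ∈ Submodule.span ℝ (φe '' ↑B), ψ' ((y μ : X)) = 0 := by
      intro ψ' hψ'
      induction hψ' using Submodule.span_induction with
      | mem x h =>
        obtain ⟨iB, hiB, rfl⟩ := h
        simp only [hBdef, Finset.coe_image, Set.mem_image, Finset.coe_univ] at hiB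
        obtain ⟨k, -, rfl⟩ := hiB
        rw [hb (u k), hΦy (u k) μ, if_neg (hμu k)]
      | zero => simp
      | add x₁ x₂ _ _ hx₁ hx₂ => simp [ContinuousLinearMap.add_apply, hx₁, hx₂]
      | smul a x₁ _ hx₁ => simp [ContinuousLinearMap.smul_apply, hx₁]
    by_cases hP : ∃ ψ, SelPred φe B Z w ψ
    · obtain ⟨hmem, hvan, hne0⟩ := sel_spec φe B Z w hP
      have hval : (sel φe B Z w) (w ξ) ≠ 0 := (hGood ξ).2 B Z hBsub hZsub hne0
      have hterm : (sel φe B Z w) ((y μ : X)) = (c μ) ξ * (sel φe B Z w) (w ξ) := by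
        rw [← hc μ, Finsupp.sum, map_sum]
        have hsplit : ∀ i ∈ F, (sel φe B Z w) ((c μ) i • w i)
            = (c μ) i * (sel φe B Z w) (w i) := by
          intro i _
          rw [map_smul, _root_.smul_eq_mul]
        rw [Finset.sum_congr rfl hsplit, ← Finset.add_sum_erase _ _ hξmem]
        have hzz : ∀ z ∈ F.erase ξ, (c μ) z * (sel φe B Z w) (w z) = 0 := by
          intro z hz
          rw [hvan z hz, mul_zero]
        rw [Finset.sum_congr rfl hzz, Finset.sum_const_zero, add_zero]
      have hne2 : (sel φe B Z w) ((y μ : X)) ≠ 0 := by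
        rw [hterm]
        exact mul_ne_zero (Finsupp.mem_support_iff.1 hξmem) hval
      exact hne2 (hkill _ hmem)
    · -- the rows are linearly dependent
      set rk : Fin n → ({z // z ∈ Z} → ℝ) := fun k z => Φ (u k) (w z.1) with hrkdef
      have hnli : ¬ LinearIndependent ℝ rk := by
        intro hli2
        have hcard := hli2.fintype_card_le_finrank
        rw [Module.finrank_pi, Fintype.card_coe, Fintype.card_fin, hZcard] at hcard
        omega
      obtain ⟨t, hsum, k0, hk0⟩ := Fintype.not_linearIndependent_iff.1 hnli
      set ψ : X →L[ℝ] ℝ := ∑ k : Fin n, t k • Φ (u k) with hψdef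
      have hψspan : ψ ∈ Submodule.span ℝ (φe '' ↑B) := by
        refine Submodule.sum_mem _ fun k _ => Submodule.smul_mem _ _ (Submodule.subset_span ?_)
        refine ⟨b (u k), ?_, hb (u k)⟩
        simp [hBdef]
      have hψvan : ∀ z ∈ Z, ψ (w z) = 0 := by
        intro z hz
        have h0 := congrFun hsum ⟨z, hz⟩
        simp only [Finset.sum_apply, Pi.smul_apply, _root_.smul_eq_mul, Pi.zero_apply,
          hrkdef] at h0
        rw [hψdef, ContinuousLinearMap.sum_apply]
        simpa only [ContinuousLinearMap.smul_apply, _root_.smul_eq_mul] using h0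
      have hψ0 : ψ = 0 := by
        by_contra hne0
        exact hP ⟨ψ, hψspan, hψvan, hne0⟩
      have heval := congrArg (fun ρ : X →L[ℝ] ℝ => ρ ((y (u k0) : X))) hψ0
      simp only [hψdef, ContinuousLinearMap.sum_apply, ContinuousLinearMap.smul_apply,
        _root_.smul_eq_mul, ContinuousLinearMap.zero_apply] at heval
      have hterm2 : ∀ k ∈ (Finset.univ : Finset (Fin n)),
          t k * Φ (u k) ((y (u k0) : X)) = if k = k0 then t k else 0 := by
        intro k _
        rw [hΦy (u k) (u k0)]
        by_cases h : k = k0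
        · subst h; simp
        · have : ¬ (u k : Λ) = u k0 := fun hh => h (Fin.val_injective (u.injective hh))
          rw [if_neg this, mul_zero, if_neg h]
      rw [Finset.sum_congr rfl hterm2, Finset.sum_ite_eq' Finset.univ k0 (fun k => t k)] at heval
      rw [if_pos (Finset.mem_univ k0)] at heval
      exact hk0 heval
end

section
/- Assume the Continuum Hypothesis (𝔠 = ℵ₁). Let ι be an index set of cardinality ℵ₁ and let H = ℓ₂(ι) be the real Hilbert space of square-summable families indexed by ι. Then there exists a dense linear subspace Y of H that contains no uncountable biorthogonal system: every biorthogonal system {(y_λ, g_λ)}_{λ∈Λ} in Y has countable index set Λ. -/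
open Cardinal Ordinal TopologicalSpace

universe u v

/-! ### Auxiliary material for the proof of Statement 3.

We construct, in any real Hilbert space `E` of cardinality at most `ℵ₁` (together with the
assumption that the set of `ℕ`-sequences of `E` also has cardinality at most `ℵ₁`, which
follows from CH in our application), a dense linear subspace without uncountable
biorthogonal systems.

The construction is a transfinite recursion of length `ω₁`: we build a dense family of
vectors `y ξ`, `ξ < ω₁`, such that each `y ξ` avoids all "bad" sets
`span (y '' G) + Sᵦᗮ`, where `G` runs over the finite subsets of earlier indices and
`Sᵦ` over the (countably many) countable subsets of `E` scheduled before `ξ`.  Each such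
bad set is a proper closed subspace whenever it is not everything, so Baire's theorem
lets us pick `y ξ` inside any prescribed ball.

Given an `ω₁`-indexed biorthogonal system `(m ν, w ν)` in the span of the `y ξ`,
a pigeonhole argument produces a fixed finite "root" `R₀` and uncountably many `ν` whose
supports trace to `R₀` below a level `δ'` beyond which the countable set
`{w (ν n)}` (for an arbitrary injection `n ↦ ν n`) has already been scheduled.  The
avoidance property then forces `m ν ∈ span (y '' R₀)` for all such `ν`, contradicting
linear independence of biorthogonal vectors. -/

noncomputable section Statement3Aux

open Submodule Set Metric
open scoped Classical ENNReal

local notation "⟪" x ", " y "⟫" => inner (𝕜 := ℝ) x y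

/-- The canonical well-ordered set of order type `ω₁`. -/
abbrev Om1 : Type u := (Cardinal.aleph 1).ord.ToType

lemma countable_Iio_om1 (ξ : Om1.{u}) : (Set.Iio ξ).Countable :=
  (Cardinal.countable_iff_lt_aleph_one _).mpr (Cardinal.mk_Iio_ord_toType ξ)

lemma mk_om1 : #(Om1.{u}) = Cardinal.aleph 1 := by
  rw [Cardinal.mk_toType, Cardinal.card_ord]


/-- The cardinality of `ℓ₂(ι)` is at most the continuum, provided `#ι ≤ 𝔠`. -/
lemma mk_lp_le {ι : Type u} (hι : #ι ≤ Cardinal.continuum) :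
    #(lp (fun _ : ι => ℝ) 2) ≤ Cardinal.continuum := by
  have hsupp : ∀ x : lp (fun _ : ι => ℝ) 2, (Function.support (⇑x : ι → ℝ)).Countable := by
    intro x
    have hx : Memℓp (⇑x) 2 := lp.memℓp x
    have hsum := hx.summable (by norm_num)
    have hc := hsum.countable_support
    have hset : Function.support (fun i => ‖x i‖ ^ (2 : ℝ≥0∞).toReal)
        = Function.support (⇑x) := by
      ext i
      simp only [Function.mem_support, ENNReal.toReal_ofNat, ne_eq]
      rw [not_iff_not, Real.rpow_eq_zero (norm_nonneg _) (by norm_num), norm_eq_zero]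
    rwa [hset] at hc
  set code : lp (fun _ : ι => ℝ) 2 → Option (ℕ → ι × ℝ) := fun x =>
    if hx : (⇑x : ι → ℝ) = 0 then none
    else some (fun n =>
      (((hsupp x).exists_eq_range (Function.support_nonempty_iff.mpr hx)).choose n,
        x (((hsupp x).exists_eq_range (Function.support_nonempty_iff.mpr hx)).choose n)))
    with hcode
  have hinj : Function.Injective code := by
    intro x x' hxx
    have hrecover : ∀ (z : lp (fun _ : ι => ℝ) 2) (hz : (⇑z : ι → ℝ) ≠ 0) (i : ι),
        (⇑z : ι → ℝ) i = (fun F : ℕ → ι × ℝ =>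
            if h : ∃ n, (F n).1 = i then (F h.choose).2 else 0)
          (fun n =>
            (((hsupp z).exists_eq_range (Function.support_nonempty_iff.mpr hz)).choose n,
              z (((hsupp z).exists_eq_range
                (Function.support_nonempty_iff.mpr hz)).choose n))) := by
      intro z hz i
      set φ := ((hsupp z).exists_eq_range (Function.support_nonempty_iff.mpr hz)).choose
        with hφ
      have hφr : Function.support (⇑z : ι → ℝ) = Set.range φ :=
        ((hsupp z).exists_eq_range (Function.support_nonempty_iff.mpr hz)).choose_spec
      simp only
      by_cases h : ∃ n, φ n = i
      · rw [dif_pos h, h.choose_spec]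
      · rw [dif_neg h]
        by_contra hzi
        have hisupp : i ∈ Function.support (⇑z : ι → ℝ) := by
          simpa [Function.mem_support] using hzi
        rw [hφr] at hisupp
        obtain ⟨n, hn⟩ := hisupp
        exact h ⟨n, hn⟩
    by_cases hx : (⇑x : ι → ℝ) = 0
    · by_cases hx' : (⇑x' : ι → ℝ) = 0
      · apply lp.ext; rw [hx, hx']
      · rw [hcode] at hxx; simp only [dif_pos hx, dif_neg hx'] at hxx
        exact absurd hxx (by simp)
    · by_cases hx' : (⇑x' : ι → ℝ) = 0
      · rw [hcode] at hxx; simp only [dif_pos hx', dif_neg hx] at hxx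
        exact absurd hxx (by simp)
      · rw [hcode] at hxx
        simp only [dif_neg hx, dif_neg hx', Option.some_inj] at hxx
        apply lp.ext
        funext i
        rw [hrecover x hx i, hrecover x' hx' i, hxx]
  calc #(lp (fun _ : ι => ℝ) 2) ≤ #(Option (ℕ → ι × ℝ)) := Cardinal.mk_le_of_injective hinj
    _ = #(ℕ → ι × ℝ) + 1 := by rw [Cardinal.mk_option]
    _ ≤ Cardinal.continuum := by
        have h1 : #(ι × ℝ) ≤ Cardinal.continuum := by
          rw [Cardinal.mk_prod, Cardinal.mk_real, Cardinal.lift_continuum, Cardinal.lift_uzero]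
          calc #ι * Cardinal.continuum ≤ Cardinal.continuum * Cardinal.continuum :=
              mul_le_mul_left hι _
            _ = Cardinal.continuum := Cardinal.mul_eq_self Cardinal.aleph0_le_continuum
        have h2 : #(ℕ → ι × ℝ) ≤ Cardinal.continuum := by
          rw [Cardinal.mk_arrow, Cardinal.mk_nat, Cardinal.lift_aleph0, Cardinal.lift_uzero]
          calc #(ι × ℝ) ^ (ℵ₀ : Cardinal.{u}) ≤ Cardinal.continuum ^ (ℵ₀ : Cardinal.{u}) :=
              Cardinal.power_le_power_right h1
            _ = Cardinal.continuum := Cardinal.continuum_power_aleph0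
        calc #(ℕ → ι × ℝ) + 1 ≤ Cardinal.continuum + Cardinal.continuum :=
              add_le_add h2 (le_trans (by norm_num) Cardinal.aleph0_le_continuum)
          _ = Cardinal.continuum := Cardinal.add_eq_self Cardinal.aleph0_le_continuum

section HilbertAux

variable {E : Type u} [NormedAddCommGroup E] [InnerProductSpace ℝ E]

/-- A family pairing to the Kronecker delta with some other family is linearly
independent. -/
lemma linearIndependent_of_biorth {α : Type*} (w m : α → E)
    (h : ∀ i j, ⟪w i, m j⟫ = if i = j then (1 : ℝ) else 0) :
    LinearIndependent ℝ w := by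
  rw [linearIndependent_iff']
  intro s c hsum i hi
  have h2 := congrArg (fun x => ⟪x, m i⟫) hsum
  simp only [sum_inner, real_inner_smul_left, inner_zero_left, h] at h2
  simp only [mul_ite, mul_one, mul_zero] at h2
  rwa [Finset.sum_ite_eq' s i c, if_pos hi] at h2

/-- A vector orthogonal to a set is orthogonal to its span. -/
lemma mem_orthogonal_span {s : Set E} {x : E} (h : ∀ v ∈ s, ⟪v, x⟫ = 0) :
    x ∈ (span ℝ s)ᗮ := by
  rw [Submodule.mem_orthogonal]
  intro u hu
  induction hu using Submodule.span_induction with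
  | mem v hv => exact h v hv
  | zero => simp
  | add a b _ _ ha hb => rw [inner_add_left, ha, hb, add_zero]
  | smul r a _ ha => rw [real_inner_smul_left, ha, mul_zero]

/-- Baire category: one can avoid countably many proper closed submodules inside any
ball. -/
lemma exists_avoid [CompleteSpace E] {ι₀ : Type u} [Countable ι₀] (V : ι₀ → Submodule ℝ E)
    (hV : ∀ i, IsClosed (V i : Set E)) (c : E) {r : ℝ} (hr : 0 < r) :
    ∃ x, dist x c < r ∧ ∀ i, V i ≠ ⊤ → x ∉ V i := by
  set U : ι₀ → Set E := fun i => if V i = ⊤ then Set.univ else (↑(V i))ᶜ with hU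
  have hopen : ∀ i, IsOpen (U i) := by
    intro i; by_cases h : V i = ⊤ <;> simp [hU, h, (hV i).isOpen_compl]
  have hdense : ∀ i, Dense (U i) := by
    intro i; by_cases h : V i = ⊤
    · simp [hU, h, dense_univ]
    · simp only [hU, if_neg h]
      rw [← interior_eq_empty_iff_dense_compl]
      by_contra hne
      exact h (Submodule.eq_top_of_nonempty_interior' _ (Set.nonempty_iff_ne_empty.mpr hne))
  have hd := dense_iInter_of_isOpen hopen hdense
  obtain ⟨x, hx⟩ := hd.inter_open_nonempty (Metric.ball c r) Metric.isOpen_ball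
    (Metric.nonempty_ball.mpr hr)
  refine ⟨x, Metric.mem_ball.mp hx.1, fun i hi => ?_⟩
  have := Set.mem_iInter.mp hx.2 i
  simpa [hU, if_neg hi] using this

/-- The "bad" subspaces of the recursive construction are never everything: the closure of
`span s + (span (range w'))ᗮ` is proper whenever `s` is finite and `w'` is an infinite
biorthogonal sequence. -/
lemma proper_bad [CompleteSpace E] (w' m' : ℕ → E)
    (hb : ∀ i j, ⟪w' i, m' j⟫ = if i = j then (1 : ℝ) else 0)
    {s : Set E} (hs : s.Finite) :
    (span ℝ s ⊔ (span ℝ (Set.range w'))ᗮ).topologicalClosure ≠ ⊤ := by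
  intro htop
  rw [Submodule.topologicalClosure_eq_top_iff] at htop
  haveI : FiniteDimensional ℝ (span ℝ s) := FiniteDimensional.span_of_finite ℝ hs
  set A := span ℝ s with hA
  set n := Module.finrank ℝ A + 1 with hn
  have hw : LinearIndependent ℝ (fun i : Fin n => w' ↑i) := by
    apply linearIndependent_of_biorth _ (fun i : Fin n => m' ↑i)
    intro i j
    rw [hb i j]
    by_cases h : i = j
    · simp [h]
    · rw [if_neg (by simpa [Fin.val_inj] using h), if_neg h]
  set U := span ℝ (Set.range fun i : Fin n => w' ↑i) with hU
  have hUrank : Module.finrank ℝ U = n := by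
    rw [hU, finrank_span_eq_card hw, Fintype.card_fin]
  let φ : U →ₗ[ℝ] A := (orthogonalProjection A).toLinearMap.comp (Submodule.subtype U)
  have hker : LinearMap.ker φ ≠ ⊥ := by
    intro h0
    have hinj := LinearMap.ker_eq_bot.mp h0
    have := LinearMap.finrank_le_finrank_of_injective hinj
    rw [hUrank] at this
    omega
  obtain ⟨z₀, hz₀ker, hz₀ne⟩ := Submodule.exists_mem_ne_zero_of_ne_bot hker
  have hproj : orthogonalProjection A (↑z₀ : E) = 0 := hz₀ker
  have hzA : (↑z₀ : E) ∈ Aᗮ := by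
    have h1 := Submodule.sub_starProjection_mem_orthogonal (K := A) (↑z₀ : E)
    rw [Submodule.starProjection_apply, hproj] at h1
    simpa using h1
  have hzW : (↑z₀ : E) ∈ span ℝ (Set.range w') := by
    have hle : U ≤ span ℝ (Set.range w') := by
      apply span_mono
      rintro _ ⟨i, rfl⟩
      exact ⟨↑i, rfl⟩
    exact hle z₀.2
  have hmem : (↑z₀ : E) ∈ (A ⊔ (span ℝ (Set.range w'))ᗮ)ᗮ := by
    rw [Submodule.mem_orthogonal]
    intro u hu
    obtain ⟨a, ha, b, hb', rfl⟩ := Submodule.mem_sup.mp hu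
    rw [inner_add_left]
    have h1 : ⟪a, (↑z₀ : E)⟫ = 0 := (Submodule.mem_orthogonal A _).mp hzA a ha
    have h2 : ⟪b, (↑z₀ : E)⟫ = 0 := by
      rw [real_inner_comm]
      exact (Submodule.mem_orthogonal _ b).mp hb' _ hzW
    rw [h1, h2, add_zero]
  rw [htop] at hmem
  exact hz₀ne (by simpa [Submodule.coe_eq_zero] using hmem)

/-- Extension of a continuous functional on a dense subspace to a Riesz vector. -/
lemma exists_riesz [CompleteSpace E] (Y : Submodule ℝ E) (hY : Dense (Y : Set E))
    (φ : Y →L[ℝ] ℝ) : ∃ w : E, ∀ u : Y, ⟪w, (u : E)⟫ = φ u := by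
  have hd : DenseRange (⇑Y.subtypeL) := by
    have : Set.range (⇑Y.subtypeL) = (Y : Set E) := Subtype.range_coe
    rw [DenseRange, this]; exact hY
  have hu : IsUniformInducing (⇑Y.subtypeL) := isometry_subtype_coe.isUniformInducing
  refine ⟨(InnerProductSpace.toDual ℝ E).symm (φ.extend Y.subtypeL), fun u => ?_⟩
  rw [InnerProductSpace.toDual_symm_apply]
  exact φ.extend_eq hd hu u

variable [CompleteSpace E]

/-- The bad subspace attached to a finite set `G` of indices and a scheduled countable
sequence `Seq β`. -/
def BadSub (Seq : Om1.{u} → ℕ → E) (p : Om1.{u} → E) (G : Finset Om1.{u}) (β : Om1.{u}) :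
    Submodule ℝ E :=
  (span ℝ (p '' ↑G) ⊔ (span ℝ (Set.range (Seq β)))ᗮ).topologicalClosure

/-- The requirements on the vector chosen at step `ξ` of the recursion. -/
def GoodPt (Seq : Om1.{u} → ℕ → E) (T : Om1.{u} → E × ℕ) (ξ : Om1.{u}) (p : Om1.{u} → E)
    (x : E) : Prop :=
  dist x (T ξ).1 < (1 / 2 : ℝ) ^ (T ξ).2 ∧
    ∀ (G : Finset Om1.{u}) (β : Om1.{u}), (∀ γ ∈ G, γ < ξ) → β < ξ →
      BadSub Seq p G β ≠ ⊤ → x ∉ BadSub Seq p G β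

lemma exists_goodPt (Seq : Om1.{u} → ℕ → E) (T : Om1.{u} → E × ℕ) (ξ : Om1.{u})
    (p : Om1.{u} → E) : ∃ x, GoodPt Seq T ξ p x := by
  haveI : Countable {γ : Om1.{u} // γ < ξ} := (countable_Iio_om1 ξ).to_subtype
  set V : Finset {γ : Om1.{u} // γ < ξ} × {γ : Om1.{u} // γ < ξ} → Submodule ℝ E :=
    fun q => BadSub Seq p (q.1.map (Function.Embedding.subtype _)) ↑q.2 with hV
  have hcl : ∀ q, IsClosed (V q : Set E) := fun q =>
    Submodule.isClosed_topologicalClosure _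
  obtain ⟨x, hx1, hx2⟩ := exists_avoid V hcl (T ξ).1
    (r := (1 / 2 : ℝ) ^ (T ξ).2) (by positivity)
  refine ⟨x, hx1, ?_⟩
  intro G β hG hβ hne
  have hGeq : (Finset.subtype (fun γ => γ < ξ) G).map (Function.Embedding.subtype _) = G := by
    rw [Finset.subtype_map]
    exact Finset.filter_true_of_mem hG
  have := hx2 ⟨Finset.subtype (fun γ => γ < ξ) G, ⟨β, hβ⟩⟩
  rw [hV] at this
  simp only [hGeq] at this
  exact this hne

/-- The recursively constructed generating family. -/
def consY (Seq : Om1.{u} → ℕ → E) (T : Om1.{u} → E × ℕ) : Om1.{u} → E :=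
  (wellFounded_lt (α := Om1.{u})).fix
    (fun ξ ih =>
      Classical.choose (exists_goodPt Seq T ξ (fun γ => if h : γ < ξ then ih γ h else 0)))

lemma consY_good (Seq : Om1.{u} → ℕ → E) (T : Om1.{u} → E × ℕ) (ξ : Om1.{u}) :
    GoodPt Seq T ξ (fun γ => if _ : γ < ξ then consY Seq T γ else 0) (consY Seq T ξ) := by
  have h := (wellFounded_lt (α := Om1.{u})).fix_eq
    (fun ξ ih =>
      Classical.choose (exists_goodPt Seq T ξ (fun γ => if h : γ < ξ then ih γ h else 0))) ξ
  have h2 := Classical.choose_spec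
    (exists_goodPt Seq T ξ (fun γ => if _ : γ < ξ then consY Seq T γ else 0))
  unfold consY
  rw [h]
  exact h2

lemma consY_avoid (Seq : Om1.{u} → ℕ → E) (T : Om1.{u} → E × ℕ) {ξ : Om1.{u}}
    {G : Finset Om1.{u}} {β : Om1.{u}} (hG : ∀ γ ∈ G, γ < ξ) (hβ : β < ξ)
    (h : BadSub Seq (consY Seq T) G β ≠ ⊤) :
    consY Seq T ξ ∉ BadSub Seq (consY Seq T) G β := by
  have hg := (consY_good Seq T ξ).2 G β hG hβ
  have hEq : BadSub Seq (fun γ => if _ : γ < ξ then consY Seq T γ else 0) G β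
      = BadSub Seq (consY Seq T) G β := by
    unfold BadSub
    congr 2
    apply congrArg
    apply Set.image_congr
    intro γ hγ
    rw [dif_pos (hG γ hγ)]
  rw [hEq] at hg
  exact hg h

/-- **The main auxiliary theorem**: any real Hilbert space of cardinality at most `ℵ₁`
(and with at most `ℵ₁` many `ℕ`-sequences) has a dense subspace admitting no
`ω₁`-indexed biorthogonal system. -/
theorem exists_dense_no_biorth (hE : #E ≤ Cardinal.aleph 1)
    (hEseq : #(ℕ → E) ≤ Cardinal.aleph 1) :
    ∃ Y : Submodule ℝ E, Dense (Y : Set E) ∧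
      ∀ m w : Om1.{u} → E, (∀ ν, m ν ∈ Y) →
        (∀ ν μ, ⟪w ν, m μ⟫ = if ν = μ then (1 : ℝ) else 0) → False := by
  haveI : Nonempty (Om1.{u}) := by
    rw [← Cardinal.mk_ne_zero_iff, mk_om1]
    exact ne_of_gt (lt_of_le_of_lt zero_le Cardinal.aleph0_lt_aleph_one)
  haveI : Nonempty E := ⟨0⟩
  have haleph0 : ℵ₀ ≤ Cardinal.aleph 1 := Cardinal.aleph0_lt_aleph_one.le
  obtain ⟨T, hT⟩ : ∃ T : Om1.{u} → E × ℕ, Function.Surjective T := by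
    have hprod : #(E × ℕ) ≤ #(Om1.{u}) := by
      rw [mk_om1, Cardinal.mk_prod, Cardinal.lift_uzero, Cardinal.mk_nat,
        Cardinal.lift_aleph0]
      calc #E * ℵ₀ ≤ Cardinal.aleph 1 * Cardinal.aleph 1 := mul_le_mul' hE haleph0
        _ = Cardinal.aleph 1 := Cardinal.mul_eq_self haleph0
    obtain ⟨f⟩ := (Cardinal.le_def _ _).mp hprod
    exact ⟨Function.invFun f, Function.invFun_surjective f.injective⟩
  obtain ⟨Seq, hSeq⟩ : ∃ Seq : Om1.{u} → ℕ → E, Function.Surjective Seq := by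
    have harr : #(ℕ → E) ≤ #(Om1.{u}) := by rw [mk_om1]; exact hEseq
    obtain ⟨f⟩ := (Cardinal.le_def _ _).mp harr
    exact ⟨Function.invFun f, Function.invFun_surjective f.injective⟩
  set y : Om1.{u} → E := consY Seq T with hy
  refine ⟨span ℝ (Set.range y), ?_, ?_⟩
  · -- density
    have hdr : Dense (Set.range y) := by
      rw [Metric.dense_iff]
      intro x r hr
      obtain ⟨n, hn⟩ := exists_pow_lt_of_lt_one hr (by norm_num : (1 / 2 : ℝ) < 1)
      obtain ⟨ξ, hξ⟩ := hT (x, n)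
      refine ⟨y ξ, ?_, Set.mem_range_self ξ⟩
      have h1 := (consY_good Seq T ξ).1
      rw [hξ] at h1
      exact Metric.mem_ball.mpr (lt_trans h1 hn)
    exact hdr.mono Submodule.subset_span
  · -- no ω₁-indexed biorthogonal system
    intro m w hmY hbio
    have hWuncount : ¬ Countable (Om1.{u}) := by
      rw [← Cardinal.mk_le_aleph0_iff, mk_om1]
      exact Cardinal.aleph0_lt_aleph_one.not_ge
    haveI : Infinite (Om1.{u}) := by
      rw [Cardinal.infinite_iff, mk_om1]; exact haleph0
    -- finite supports
    have hrep : ∀ ν, ∃ Fv : Finset Om1.{u}, m ν ∈ span ℝ (y '' ↑Fv) := by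
      intro ν
      obtain ⟨t, hts, hmem⟩ := Submodule.mem_span_finite_of_mem_span (hmY ν)
      refine ⟨t.image (Function.invFun y), ?_⟩
      refine Submodule.span_mono ?_ hmem
      intro v hv
      have hvr : v ∈ Set.range y := hts hv
      refine ⟨Function.invFun y v, ?_, Function.invFun_eq hvr⟩
      rw [Finset.coe_image]
      exact Set.mem_image_of_mem _ hv
    choose F hF using hrep
    -- schedule the countable family of functionals
    set nu : ℕ ↪ Om1.{u} := Infinite.natEmbedding (Om1.{u}) with hnu
    obtain ⟨β₀, hβ₀⟩ := hSeq (fun n => w (nu n))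
    obtain ⟨δ', hδ'⟩ : ∃ δ' : Om1.{u}, β₀ < δ' := by
      by_contra hcon
      push_neg at hcon
      apply hWuncount
      rw [← Set.countable_univ_iff]
      have hsub : (Set.univ : Set Om1.{u}) ⊆ Set.Iio β₀ ∪ {β₀} := by
        intro γ _
        rcases lt_or_eq_of_le (hcon γ) with h | h
        · exact Or.inl h
        · exact Or.inr (by simpa using h)
      exact Set.Countable.mono hsub ((countable_Iio_om1 β₀).union (Set.countable_singleton β₀))
    -- pigeonhole on traces below δ'
    set tr : Om1.{u} → Finset Om1.{u} := fun ν => (F ν).filter (· < δ') with htr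
    have htrmem : ∀ ν, tr ν ∈ {G : Finset Om1.{u} | ↑G ⊆ Set.Iio δ'} := by
      intro ν
      simp only [Set.mem_setOf_eq, htr]
      intro γ hγ
      simp only [Finset.coe_filter, Set.mem_setOf_eq] at hγ
      exact hγ.2
    have htrset : {G : Finset Om1.{u} | ↑G ⊆ Set.Iio δ'}.Countable := by
      have h1 := Set.countable_setOf_finite_subset (countable_Iio_om1 δ')
      have heq : {G : Finset Om1.{u} | ↑G ⊆ Set.Iio δ'}
          = (fun G : Finset Om1.{u} => (↑G : Set Om1.{u})) ⁻¹'
            {t | t.Finite ∧ t ⊆ Set.Iio δ'} := by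
        ext G
        simp [Finset.finite_toSet]
      rw [heq]
      exact h1.preimage Finset.coe_injective
    obtain ⟨R₀, hR₀sub, hR₀unc⟩ :
        ∃ R₀ : Finset Om1.{u}, ↑R₀ ⊆ Set.Iio δ' ∧ ¬ (tr ⁻¹' {R₀}).Countable := by
      by_contra hcon
      push_neg at hcon
      apply hWuncount
      rw [← Set.countable_univ_iff]
      have hsub : (Set.univ : Set Om1.{u})
          ⊆ ⋃ G ∈ {G : Finset Om1.{u} | ↑G ⊆ Set.Iio δ'}, tr ⁻¹' {G} := by
        intro ν _
        exact Set.mem_biUnion (htrmem ν) rfl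
      exact Set.Countable.mono hsub (Set.Countable.biUnion htrset fun G hG => hcon G hG)
    set A := tr ⁻¹' {R₀} \ Set.range nu with hA
    have hAunc : ¬ A.Countable := by
      intro hc
      apply hR₀unc
      have hsub : tr ⁻¹' {R₀} ⊆ A ∪ Set.range nu := by
        intro ν hν
        by_cases h : ν ∈ Set.range nu
        · exact Or.inr h
        · exact Or.inl ⟨hν, h⟩
      exact Set.Countable.mono hsub (hc.union (Set.countable_range nu))
    have hAinf : A.Infinite := by
      by_contra h
      exact hAunc (Set.not_infinite.mp h).countable
    -- the heart of the argument: all m ν for ν ∈ A live in span (y '' R₀)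
    set S := span ℝ (Set.range (Seq β₀)) with hS
    have hproper : ∀ G : Finset Om1.{u}, BadSub Seq y G β₀ ≠ ⊤ := by
      intro G
      unfold BadSub
      rw [hβ₀]
      apply proper_bad (fun n => w (nu n)) (fun n => m (nu n))
        (fun i j => by
          rw [hbio (nu i) (nu j)]
          by_cases h : i = j
          · simp [h]
          · rw [if_neg (fun hc => h (nu.injective hc)), if_neg h])
        (G.finite_toSet.image y)
    have hgood : ∀ ν ∈ A, m ν ∈ span ℝ (y '' ↑R₀) := by
      intro ν hν
      have hνtr : tr ν = R₀ := hν.1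
      have hνnu : ν ∉ Set.range nu := hν.2
      have hmS : m ν ∈ Sᗮ := by
        apply mem_orthogonal_span
        rintro _ ⟨n, rfl⟩
        have hn : Seq β₀ n = w (nu n) := congrFun hβ₀ n
        rw [hn, hbio (nu n) ν, if_neg]
        intro hc
        exact hνnu ⟨n, hc⟩
      set Q := (F ν).filter (fun γ => ¬ γ < δ') with hQ
      have hsplit : R₀ ∪ Q = F ν := by
        rw [← hνtr, htr, hQ]
        exact Finset.filter_union_filter_not_eq _ _
      have hQprop : ∀ q ∈ Q, β₀ < q ∧ ∀ ρ ∈ R₀, ρ < q := by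
        intro q hq
        have hqδ : δ' ≤ q := not_lt.mp (Finset.mem_filter.mp hq).2
        refine ⟨lt_of_lt_of_le hδ' hqδ, fun ρ hρ => ?_⟩
        exact lt_of_lt_of_le (hR₀sub hρ) hqδ
      have key : ∀ (n : ℕ) (Qc : Finset Om1.{u}), Qc.card = n →
          (∀ q ∈ Qc, β₀ < q ∧ ∀ ρ ∈ R₀, ρ < q) →
          ∀ x, x ∈ span ℝ (y '' ↑(R₀ ∪ Qc)) → x ∈ Sᗮ → x ∈ span ℝ (y '' ↑R₀) := by
        intro n
        induction n with
        | zero =>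
          intro Qc hcard _ x hx _
          rw [Finset.card_eq_zero.mp hcard] at hx
          simpa using hx
        | succ n ih =>
          intro Qc hcard hQc x hx hxS
          have hne : Qc.Nonempty := by
            rw [← Finset.card_pos, hcard]; omega
          set q := Qc.max' hne with hq
          set Q' := Qc.erase q with hQ'
          have hcard' : Q'.card = n := by
            rw [hQ', Finset.card_erase_of_mem (Qc.max'_mem hne), hcard]
            omega
          have hins : R₀ ∪ Qc = insert q (R₀ ∪ Q') := by
            conv_lhs => rw [← Finset.insert_erase (Qc.max'_mem hne)]
            rw [Finset.union_insert]
          rw [hins, Finset.coe_insert, Set.image_insert_eq] at hx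
          obtain ⟨a, z, hz, hxeq⟩ := Submodule.mem_span_insert.mp hx
          by_cases ha : a = 0
          · rw [ha, zero_smul, zero_add] at hxeq
            rw [hxeq]
            exact ih Q' hcard' (fun q' hq' => hQc q' (Finset.mem_of_mem_erase hq')) z hz
              (hxeq ▸ hxS)
          · exfalso
            have hyq : consY Seq T q ∈ span ℝ (consY Seq T '' ↑(R₀ ∪ Q')) ⊔ Sᗮ := by
              have hyqe : consY Seq T q = a⁻¹ • (x - z) := by
                rw [hxeq, add_sub_cancel_right, smul_smul, inv_mul_cancel₀ ha, one_smul]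
              rw [hyqe]
              exact Submodule.smul_mem _ _ (Submodule.sub_mem _
                (Submodule.mem_sup_right hxS) (Submodule.mem_sup_left hz))
            have hlt : ∀ γ ∈ R₀ ∪ Q', γ < q := by
              intro γ hγ
              rcases Finset.mem_union.mp hγ with h | h
              · exact (hQc q (Qc.max'_mem hne)).2 γ h
              · have h1 := Finset.le_max' Qc γ (Finset.mem_of_mem_erase h)
                have h2 := (Finset.mem_erase.mp h).1
                exact lt_of_le_of_ne h1 h2
            have hβq : β₀ < q := (hQc q (Qc.max'_mem hne)).1
            exact consY_avoid Seq T hlt hβq (hproper (R₀ ∪ Q'))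
              (Submodule.le_topologicalClosure _ hyq)
      have hm1 : m ν ∈ span ℝ (consY Seq T '' ↑(R₀ ∪ Q)) := by
        rw [hsplit]; exact hF ν
      exact key Q.card Q rfl hQprop (m ν) hm1 hmS
    -- final contradiction: too many independent vectors in a finite-dimensional space
    set r := R₀.card with hr
    set emb : ℕ ↪ ↥A := Set.Infinite.natEmbedding A hAinf with hemb
    have hMMA : ∀ k : Fin (r + 1), (↑(emb (k : ℕ)) : Om1.{u}) ∈ A :=
      fun k => (emb (k : ℕ)).2
    set MM : Fin (r + 1) → Om1.{u} := fun k => ↑(emb (k : ℕ)) with hMM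
    have hMMinj : Function.Injective MM := by
      intro k k' h
      have h2 : (k : ℕ) = (k' : ℕ) := emb.injective (Subtype.val_injective h)
      exact Fin.val_injective h2
    have hindep : LinearIndependent ℝ (fun k : Fin (r + 1) => m (MM k)) := by
      apply linearIndependent_of_biorth _ (fun k => w (MM k))
      intro i j
      rw [real_inner_comm, hbio (MM j) (MM i)]
      by_cases h : i = j
      · simp [h]
      · rw [if_neg (fun hc => h (hMMinj hc).symm), if_neg h]
    haveI : FiniteDimensional ℝ (span ℝ (consY Seq T '' ↑R₀)) :=
      FiniteDimensional.span_of_finite ℝ (R₀.finite_toSet.image _)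
    have hle : span ℝ (Set.range fun k : Fin (r + 1) => m (MM k))
        ≤ span ℝ (consY Seq T '' ↑R₀) := by
      rw [Submodule.span_le]
      rintro _ ⟨k, rfl⟩
      exact hgood (MM k) (hMMA k)
    have h1 : Module.finrank ℝ (span ℝ (Set.range fun k : Fin (r + 1) => m (MM k)))
        = r + 1 := by
      rw [finrank_span_eq_card hindep, Fintype.card_fin]
    have h2 : Module.finrank ℝ (span ℝ (consY Seq T '' ↑R₀)) ≤ r := by
      have hcoe : consY Seq T '' ↑R₀ = ↑(R₀.image (consY Seq T)) := by
        rw [Finset.coe_image]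
      rw [hcoe]
      exact le_trans (finrank_span_finset_le_card _) Finset.card_image_le
    have h3 := Submodule.finrank_mono hle
    omega

end HilbertAux

end Statement3Aux

/-- (CH) The Hilbert space `ℓ₂(ι)`, for `ι` of cardinality `ℵ₁`, has a dense
linear subspace with no uncountable biorthogonal system. -/
theorem statement3 {ι : Type u} (hι : Cardinal.mk ι = Cardinal.aleph 1)
    (hCH : Cardinal.continuum.{u} = Cardinal.aleph 1) :
    ∃ Y : Submodule ℝ (lp (fun _ : ι => ℝ) 2),
      Dense (Y : Set (lp (fun _ : ι => ℝ) 2)) ∧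
      ∀ (Λ : Type v) (y : Λ → Y) (g : Λ → Y →L[ℝ] ℝ),
        IsBiorthogonal y g → Countable Λ := by
  have hιc : #ι ≤ Cardinal.continuum.{u} := by rw [hι, ← hCH]
  have hlp : #(lp (fun _ : ι => ℝ) 2) ≤ Cardinal.continuum.{u} := mk_lp_le hιc
  have hE : #(lp (fun _ : ι => ℝ) 2) ≤ Cardinal.aleph 1 := hCH ▸ hlp
  have hEseq : #(ℕ → lp (fun _ : ι => ℝ) 2) ≤ Cardinal.aleph 1 := by
    rw [← hCH, Cardinal.mk_arrow, Cardinal.mk_nat, Cardinal.lift_aleph0, Cardinal.lift_uzero]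
    calc #(lp (fun _ : ι => ℝ) 2) ^ (ℵ₀ : Cardinal.{u})
        ≤ Cardinal.continuum.{u} ^ (ℵ₀ : Cardinal.{u}) :=
          Cardinal.power_le_power_right hlp
      _ = Cardinal.continuum.{u} := Cardinal.continuum_power_aleph0
  obtain ⟨Y, hYdense, hY⟩ := exists_dense_no_biorth hE hEseq
  refine ⟨Y, hYdense, ?_⟩
  intro Λ yv g hbio
  by_contra hcount
  have hlt : (ℵ₀ : Cardinal.{v}) < #Λ :=
    not_le.mp (fun hle => hcount (Cardinal.mk_le_aleph0_iff.mp hle))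
  have h1 : Cardinal.aleph 1 ≤ #Λ := by
    rw [← Cardinal.succ_aleph0]
    exact Order.succ_le_of_lt hlt
  have hemb : Nonempty (Om1.{u} ↪ Λ) := by
    rw [← Cardinal.lift_mk_le', mk_om1]
    have heq : Cardinal.lift.{v} (Cardinal.aleph 1 : Cardinal.{u})
        = Cardinal.lift.{u} (Cardinal.aleph 1 : Cardinal.{v}) := by
      rw [← Cardinal.succ_aleph0, ← Cardinal.succ_aleph0, Cardinal.lift_succ,
        Cardinal.lift_succ, Cardinal.lift_aleph0, Cardinal.lift_aleph0]
    rw [heq]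
    exact Cardinal.lift_le.mpr h1
  obtain ⟨e⟩ := hemb
  have hw : ∀ lam : Λ, ∃ wv : lp (fun _ : ι => ℝ) 2,
      ∀ u : Y, inner (𝕜 := ℝ) wv (u : lp (fun _ : ι => ℝ) 2) = g lam u :=
    fun lam => exists_riesz Y hYdense (g lam)
  choose wv hwv using hw
  apply hY (fun ν => ↑(yv (e ν))) (fun ν => wv (e ν)) (fun ν => (yv (e ν)).2)
  intro ν μ
  rw [hwv (e ν) (yv (e μ))]
  by_cases h : ν = μ
  · rw [if_pos h, h]
    exact hbio.1 (e μ)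
  · rw [if_neg h]
    exact hbio.2 (e ν) (e μ) (fun hc => h (e.injective hc))
end

section
/- Let X be a weakly Lindelöf determined (WLD) real Banach space whose density character equals 𝔠⁺, the successor cardinal of the continuum. Then every dense linear subspace Z of X contains a biorthogonal system of cardinality 𝔠⁺: there exist families (z_α)_{α<𝔠⁺} in Z and (ψ_α)_{α<𝔠⁺} in X* such that ψ_α(z_β) = 1 if α = β and 0 otherwise. -/
open Cardinal Ordinal TopologicalSpace

universe u v

theorem myFreeSet {κ : Cardinal.{u}} (hreg : κ.IsRegular) (hκ : ℵ₁ < κ)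
    (F : Ordinal.{u} → Set Ordinal.{u})
    (hFsub : ∀ i, F i ⊆ Set.Iio i) (hFc : ∀ i, (F i).Countable) :
    ∃ S : Set Ordinal.{u}, (∀ a < κ.ord, ∃ i ∈ S, a ≤ i) ∧ (∀ i ∈ S, i < κ.ord) ∧
      ∀ i ∈ S, ∀ j ∈ S, j ∉ F i := by
  have hℵ0 : ℵ₀ ≤ κ := hreg.aleph0_le
  have holim : Order.IsSuccLimit κ.ord := Cardinal.isSuccLimit_ord hℵ0
  set o := κ.ord with ho
  set A : Ordinal.{u} → Set Ordinal.{u} := fun δ => {i | i < o ∧ F i ⊆ Set.Iic δ} with hA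
  have main : ∃ δ, δ < o ∧ ∀ b, b < o → ∃ i ∈ A δ, b ≤ i := by
    by_contra hcon
    push_neg at hcon
    -- choose bounds
    have hB : ∀ δ, ∃ b, δ < o → (b < o ∧ ∀ i ∈ A δ, i < b) := by
      intro δ
      by_cases hδ : δ < o
      · obtain ⟨b, hb, hball⟩ := hcon δ hδ
        exact ⟨b, fun _ => ⟨hb, hball⟩⟩
      · exact ⟨0, fun h => absurd h hδ⟩
    choose B hBspec using hB
    -- the recursion
    set c : Ordinal.{u} → Ordinal.{u} := fun α =>
      Ordinal.limitRecOn α 0 (fun _ ih => max (Order.succ ih) (B ih))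
        (fun α _ ih => Ordinal.bsup α ih) with hc
    have hc_succ : ∀ β, c (Order.succ β) = max (Order.succ (c β)) (B (c β)) := fun β =>
      Ordinal.limitRecOn_succ _ _ _ _
    have hc_limit : ∀ α, Order.IsSuccLimit α → c α = Ordinal.bsup α (fun β _ => c β) := fun α h =>
      Ordinal.limitRecOn_limit _ _ _ _ h
    have hmono : ∀ α β, β < α → c β < c α := by
      intro α
      induction α using Ordinal.induction with
      | _ α IH =>
        intro β hβ
        rcases Ordinal.zero_or_succ_or_isSuccLimit α with h0 | ⟨γ, hγ⟩ | hlim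
        · exact absurd hβ (by rw [h0]; exact not_lt_bot (a := β))
        · subst hγ
          have hβγ : β ≤ γ := Order.lt_succ_iff.mp hβ
          have h1 : c β ≤ c γ := by
            rcases eq_or_lt_of_le hβγ with h | h
            · exact le_of_eq (by rw [h])
            · exact (IH γ (Order.lt_succ γ) β h).le
          calc c β ≤ c γ := h1
            _ < Order.succ (c γ) := Order.lt_succ _
            _ ≤ max (Order.succ (c γ)) (B (c γ)) := le_max_left _ _
            _ = c (Order.succ γ) := (hc_succ γ).symm
        · have hsb : Order.succ β < α := hlim.succ_lt hβ
          have h2 : c (Order.succ β) ≤ c α := by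
            rw [hc_limit α hlim]
            exact Ordinal.le_bsup (fun β _ => c β) _ hsb
          calc c β < Order.succ (c β) := Order.lt_succ _
            _ ≤ max (Order.succ (c β)) (B (c β)) := le_max_left _ _
            _ = c (Order.succ β) := (hc_succ β).symm
            _ ≤ c α := h2
    have hcmono : ∀ α β, β ≤ α → c β ≤ c α := by
      intro α β h
      rcases eq_or_lt_of_le h with h | h
      · exact le_of_eq (by rw [h])
      · exact (hmono α β h).le
    have hcof : o.cof = κ := hreg.cof_eq
    have hbound : ∀ α, α ≤ (ℵ₁ : Cardinal.{u}).ord → c α < o := by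
      intro α
      induction α using Ordinal.induction with
      | _ α IH =>
        intro hα
        rcases Ordinal.zero_or_succ_or_isSuccLimit α with h0 | ⟨γ, hγ⟩ | hlim
        · rw [h0]
          show c 0 < o
          have : c 0 = 0 := Ordinal.limitRecOn_zero _ _ _
          rw [this]
          exact holim.pos
        · subst hγ
          have hγα : γ ≤ (ℵ₁ : Cardinal.{u}).ord := ((Order.lt_succ γ).trans_le hα).le
          have h1 : c γ < o := IH γ (Order.lt_succ γ) hγα
          rw [hc_succ γ]
          exact max_lt (holim.succ_lt h1) ((hBspec (c γ) h1).1)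
        · rw [hc_limit α hlim]
          apply Ordinal.bsup_lt_ord
          · rw [hcof]
            calc α.card ≤ ((ℵ₁ : Cardinal.{u}).ord).card := Ordinal.card_le_card hα
              _ = ℵ₁ := Cardinal.card_ord _
              _ < κ := hκ
          · intro i hi
            exact IH i hi (hi.le.trans hα)
    have hω₁lim : Order.IsSuccLimit ((ℵ₁ : Cardinal.{u}).ord) :=
      Cardinal.isSuccLimit_ord aleph0_lt_aleph_one.le
    set istar := c ((ℵ₁ : Cardinal.{u}).ord) with histar
    have histar_lt : istar < o := hbound _ le_rfl
    have histar_eq : istar = Ordinal.bsup _ (fun β _ => c β) := hc_limit _ hω₁lim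
    -- find α < ω₁ with F istar ⊆ Iic (c α)
    have hsmall : ∃ α, α < (ℵ₁ : Cardinal.{u}).ord ∧ F istar ⊆ Set.Iic (c α) := by
      rcases (F istar).eq_empty_or_nonempty with hemp | hne
      · exact ⟨0, hω₁lim.pos, by rw [hemp]; exact Set.empty_subset _⟩
      · obtain ⟨g, hg⟩ := (hFc istar).exists_eq_range hne
        have hgl : ∀ n : ℕ, ∃ β, β < (ℵ₁ : Cardinal.{u}).ord ∧ g n < c β := by
          intro n
          have hmem : g n ∈ F istar := by rw [hg]; exact Set.mem_range_self n
          have : g n < istar := hFsub istar hmem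
          rw [histar_eq] at this
          obtain ⟨β, hβ, hlt⟩ := (Ordinal.lt_bsup _).mp this
          exact ⟨β, hβ, hlt⟩
        choose β hβ1 hβ2 using hgl
        refine ⟨⨆ n, β n, ?_, ?_⟩
        · refine Ordinal.iSup_lt_ord_lift ?_ hβ1
          rw [Cardinal.mk_nat, Cardinal.lift_aleph0, Cardinal.isRegular_aleph_one.cof_eq]
          exact Cardinal.aleph0_lt_aleph_one
        · intro x hx
          rw [hg] at hx
          obtain ⟨n, rfl⟩ := hx
          exact le_of_lt ((hβ2 n).trans_le (hcmono _ _ (Ordinal.le_iSup β n)))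
    obtain ⟨α, hα, hFsubα⟩ := hsmall
    have hδo : c α < o := hbound α hα.le
    have histarA : istar ∈ A (c α) := ⟨histar_lt, hFsubα⟩
    have h1 : istar < B (c α) := (hBspec (c α) hδo).2 istar histarA
    have h2 : B (c α) ≤ c (Order.succ α) := by
      rw [hc_succ α]; exact le_max_right _ _
    have h3 : c (Order.succ α) < istar := hmono _ _ (hω₁lim.succ_lt hα)
    exact absurd ((h1.trans_le h2).trans h3) (lt_irrefl istar)
  obtain ⟨δ, hδ, hub⟩ := main
  refine ⟨{i | i ∈ A δ ∧ δ < i}, ?_, ?_, ?_⟩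
  · intro a ha
    have hb : max a (Order.succ δ) < o := max_lt ha (holim.succ_lt hδ)
    obtain ⟨i, hiA, hi⟩ := hub _ hb
    exact ⟨i, ⟨hiA, lt_of_lt_of_le ((Order.lt_succ δ).trans_le (le_max_right _ _)) hi⟩,
      (le_max_left _ _).trans hi⟩
  · exact fun i hi => hi.1.1
  · intro i hi j hj hjF
    exact absurd (hi.1.2 hjF) (not_le.mpr hj.2)

theorem my_supp_countable {X : Type u} [NormedAddCommGroup X] [NormedSpace ℝ X]
    {Γ : Type u} {e : Γ → X} {f : Γ → X →L[ℝ] ℝ} (hb : IsBiorthogonal e f)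
    (hd : Dense (Submodule.span ℝ (Set.range e) : Set X)) (x : X) :
    {γ | f γ x ≠ 0}.Countable := by
  obtain ⟨uu, hu, hlim⟩ := mem_closure_iff_seq_limit.mp (hd x)
  choose c hc using fun n =>
    Finsupp.mem_span_range_iff_exists_finsupp.mp (SetLike.mem_coe.mp (hu n))
  apply Set.Countable.mono ?_ (Set.countable_iUnion (fun n => (c n).support.countable_toSet))
  intro γ hγ
  by_contra hA
  simp only [Set.mem_iUnion, Finset.mem_coe] at hA
  push_neg at hA
  apply hγ
  have hzero : ∀ n, f γ (uu n) = 0 := by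
    intro n
    rw [← hc n, map_finsuppSum]
    apply Finset.sum_eq_zero
    intro i hi
    have hne : γ ≠ i := fun h => hA n (h ▸ hi)
    simp only [map_smul, hb.2 γ i hne, smul_zero]
  have h1 : Filter.Tendsto (fun n => f γ (uu n)) Filter.atTop (nhds (f γ x)) :=
    ((f γ).continuous.tendsto x).comp hlim
  rw [show (fun n => f γ (uu n)) = fun _ => (0 : ℝ) from funext hzero] at h1
  exact tendsto_nhds_unique h1 tendsto_const_nhds

theorem my_card_ge {X : Type u} [NormedAddCommGroup X] [NormedSpace ℝ X]
    {Γ : Type u} {e : Γ → X}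
    (hd : Dense (Submodule.span ℝ (Set.range e) : Set X))
    (hdens : densityChar X = Order.succ Cardinal.continuum.{u}) :
    Order.succ Cardinal.continuum.{u} ≤ #Γ := by
  by_contra h
  push_neg at h
  have hΓc : #Γ ≤ 𝔠 := Order.lt_succ_iff.mp h
  have hsurj : Function.Surjective
      (fun cc : Γ →₀ ℝ => (⟨Finsupp.linearCombination ℝ e cc, by
        rw [SetLike.mem_coe, ← Finsupp.range_linearCombination]
        exact LinearMap.mem_range_self _ cc⟩ :
        (Submodule.span ℝ (Set.range e) : Set X))) := by
    rintro ⟨x, hx⟩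
    have hx' : x ∈ LinearMap.range (Finsupp.linearCombination ℝ e) := by
      rw [Finsupp.range_linearCombination]; exact SetLike.mem_coe.mp hx
    obtain ⟨cc, hcc⟩ := hx'
    exact ⟨cc, Subtype.ext hcc⟩
  have h1 : #(Submodule.span ℝ (Set.range e) : Set X) ≤ #(Γ →₀ ℝ) :=
    Cardinal.mk_le_of_surjective hsurj
  have h2 : #(Γ →₀ ℝ) ≤ 𝔠 := by
    cases finite_or_infinite Γ with
    | inl hfin =>
      have : Fintype Γ := Fintype.ofFinite Γ
      rw [Cardinal.mk_finsupp_lift_of_fintype]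
      rw [Cardinal.mk_real, Cardinal.lift_continuum]
      exact Cardinal.power_nat_le Cardinal.aleph0_le_continuum
    | inr hinf =>
      rw [Cardinal.mk_finsupp_lift_of_infinite]
      rw [Cardinal.mk_real, Cardinal.lift_continuum, Cardinal.lift_uzero]
      exact max_le hΓc le_rfl
  have h3 : densityChar X ≤ 𝔠 :=
    le_trans (csInf_le (OrderBot.bddBelow _) ⟨_, hd, rfl⟩) (h1.trans h2)
  rw [hdens] at h3
  exact absurd h3 (Order.lt_succ (𝔠 : Cardinal.{u})).not_ge

instance myWO (o : Ordinal.{u}) : IsWellOrder o.ToType (· < ·) := isWellOrder_lt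

/-- In a WLD Banach space of density character `𝔠⁺`, every dense linear
subspace contains a biorthogonal system of cardinality `𝔠⁺`. -/
theorem statement4 {X : Type u} [NormedAddCommGroup X] [NormedSpace ℝ X] [CompleteSpace X]
    (hWLD : IsWLD X) (hdens : densityChar X = Order.succ Cardinal.continuum.{u}) :
    ∀ Z : Submodule ℝ X, Dense (Z : Set X) →
      ∃ (I : Type u) (z : I → X) (ψ : I → X →L[ℝ] ℝ),
        Cardinal.mk I = Order.succ Cardinal.continuum.{u} ∧ (∀ i, z i ∈ Z) ∧
        IsBiorthogonal z ψ := by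
  intro Z hZ
  obtain ⟨Γ, e, f, hmb, _⟩ := hWLD
  set κ : Cardinal.{u} := Order.succ Cardinal.continuum.{u} with hκdef
  have hreg : κ.IsRegular := Cardinal.isRegular_succ Cardinal.aleph0_le_continuum
  have hℵ0κ : ℵ₀ ≤ κ := hreg.aleph0_le
  have holim : Order.IsSuccLimit κ.ord := Cardinal.isSuccLimit_ord hℵ0κ
  have hΓ : κ ≤ #Γ := my_card_ge hmb.2.1 hdens
  have hsupp : ∀ x : X, {γ | f γ x ≠ 0}.Countable := my_supp_countable hmb.1 hmb.2.1
  have htype : type ((· < ·) : κ.ord.ToType → κ.ord.ToType → Prop) = κ.ord := type_toType _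
  -- step existence
  have key : ∀ (i : κ.ord.ToType) (w : ∀ j, j < i → X), ∃ p : Γ × X, p.2 ∈ Z ∧ f p.1 p.2 = 1 ∧
      ∀ j (h : j < i), f p.1 (w j h) = 0 := by
    intro i w
    have hcardlt : #{j // j < i} < κ := by
      have h1 := Cardinal.card_typein_toType_lt κ i
      exact (Ordinal.card_typein i).trans_lt h1
    have hU : #(⋃ j : {j // j < i}, {γ | f γ (w j.1 j.2) ≠ 0}) < #Γ := by
      calc #(⋃ j : {j // j < i}, {γ | f γ (w j.1 j.2) ≠ 0})
          ≤ #{j // j < i} * ⨆ j : {j // j < i}, #({γ | f γ (w j.1 j.2) ≠ 0}) :=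
            Cardinal.mk_iUnion_le _
        _ ≤ #{j // j < i} * ℵ₀ := by
            apply mul_le_mul' le_rfl
            exact ciSup_le' fun j =>
              Cardinal.mk_le_aleph0_iff.mpr (Set.countable_coe_iff.mpr (hsupp _))
        _ < κ := Cardinal.mul_lt_of_lt hℵ0κ hcardlt
            (lt_of_le_of_lt Cardinal.aleph0_le_continuum (Order.lt_succ _))
        _ ≤ #Γ := hΓ
    have hex : ∃ γ₀, γ₀ ∉ ⋃ j : {j // j < i}, {γ | f γ (w j.1 j.2) ≠ 0} := by
      by_contra hcon
      push_neg at hcon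
      rw [Set.eq_univ_of_forall hcon, Cardinal.mk_univ] at hU
      exact lt_irrefl _ hU
    obtain ⟨γ₀, hγ₀⟩ := hex
    have hfne : ∃ z ∈ Z, f γ₀ z ≠ 0 := by
      by_contra hcon
      push_neg at hcon
      have hker : (Z : Set X) ⊆ (f γ₀) ⁻¹' {0} := fun y hy => hcon y hy
      have hcl : closure (Z : Set X) ⊆ (f γ₀) ⁻¹' {0} :=
        closure_minimal hker (IsClosed.preimage (f γ₀).continuous isClosed_singleton)
      have h0 : f γ₀ (e γ₀) = 0 := hcl (by rw [hZ.closure_eq]; trivial)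
      rw [hmb.1.1 γ₀] at h0
      exact one_ne_zero h0
    obtain ⟨z₀, hz₀Z, hz₀⟩ := hfne
    refine ⟨(γ₀, (f γ₀ z₀)⁻¹ • z₀), Z.smul_mem _ hz₀Z, ?_, ?_⟩
    · show f γ₀ ((f γ₀ z₀)⁻¹ • z₀) = 1
      rw [map_smul, _root_.smul_eq_mul]
      exact inv_mul_cancel₀ hz₀
    · intro j h
      by_contra hne
      exact hγ₀ (Set.mem_iUnion.mpr ⟨⟨j, h⟩, hne⟩)
  have wf : WellFounded ((· < ·) : κ.ord.ToType → κ.ord.ToType → Prop) := IsWellFounded.wf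
  set G : κ.ord.ToType → Γ × X :=
    wf.fix (fun i ih => Classical.choose (key i (fun j h => (ih j h).2))) with hG
  have hGeq : ∀ i, G i = Classical.choose (key i (fun j h => (G j).2)) := by
    intro i
    rw [hG]
    exact wf.fix_eq _ i
  set γ : κ.ord.ToType → Γ := fun i => (G i).1 with hγdef
  set z : κ.ord.ToType → X := fun i => (G i).2 with hzdef
  have hspecs : ∀ i, z i ∈ Z ∧ f (γ i) (z i) = 1 ∧ ∀ j (h : j < i), f (γ i) (z j) = 0 := by
    intro i
    have h1 := Classical.choose_spec (key i (fun j h => (G j).2))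
    rw [← hGeq i] at h1
    exact h1
  have hγinj : Function.Injective γ := by
    intro a b hab
    by_contra hne
    rcases lt_or_gt_of_ne hne with h | h
    · have h0 := (hspecs b).2.2 a h
      have h1 := (hspecs a).2.1
      rw [hab] at h1
      rw [h1] at h0
      exact one_ne_zero h0
    · have h0 := (hspecs a).2.2 b h
      have h1 := (hspecs b).2.1
      rw [← hab] at h1
      rw [h1] at h0
      exact one_ne_zero h0
  -- the enumeration map
  have henlt : ∀ q, q < κ.ord → q < type ((· < ·) : κ.ord.ToType → κ.ord.ToType → Prop) := by
    intro q hq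
    rwa [htype]
  classical
  set Fo : Ordinal.{u} → Set Ordinal.{u} := fun q =>
    if hq : q < κ.ord then
      (fun j : κ.ord.ToType => typein ((· < ·) : κ.ord.ToType → κ.ord.ToType → Prop) j) ''
        {j : κ.ord.ToType | j < enum ((· < ·) : κ.ord.ToType → κ.ord.ToType → Prop) ⟨q, henlt q hq⟩ ∧
          f (γ j) (z (enum ((· < ·) : κ.ord.ToType → κ.ord.ToType → Prop) ⟨q, henlt q hq⟩)) ≠ 0}
    else ∅ with hFo
  have hFsub : ∀ q, Fo q ⊆ Set.Iio q := by
    intro q p hp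
    simp only [hFo] at hp
    by_cases hq : q < κ.ord
    · simp only [dif_pos hq] at hp
      obtain ⟨j, ⟨hj1, _⟩, rfl⟩ := hp
      have := (typein_lt_typein ((· < ·) : κ.ord.ToType → κ.ord.ToType → Prop)).mpr hj1
      rwa [typein_enum] at this
    · simp only [dif_neg hq] at hp
      exact absurd hp (Set.notMem_empty p)
  have hFc : ∀ q, (Fo q).Countable := by
    intro q
    simp only [hFo]
    by_cases hq : q < κ.ord
    · simp only [dif_pos hq]
      apply Set.Countable.image
      apply Set.Countable.mono (fun j hj => hj.2) ((hsupp _).preimage hγinj)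
    · simp only [dif_neg hq]
      exact Set.countable_empty
  obtain ⟨S, hSunb, hSlt, hSfree⟩ :=
    myFreeSet hreg (lt_of_le_of_lt Cardinal.aleph_one_le_continuum (Order.lt_succ _)) Fo hFsub hFc
  refine ⟨{x : κ.ord.ToType // typein ((· < ·) : κ.ord.ToType → κ.ord.ToType → Prop) x ∈ S}, fun x => z x.1, fun x => f (γ x.1), ?_,
    fun x => (hspecs x.1).1, fun x => (hspecs x.1).2.1, ?_⟩
  · -- cardinality
    apply le_antisymm
    · calc #{x : κ.ord.ToType // typein ((· < ·) : κ.ord.ToType → κ.ord.ToType → Prop) x ∈ S} ≤ #κ.ord.ToType := Cardinal.mk_subtype_le _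
        _ = κ := by rw [mk_toType, Cardinal.card_ord]
    · by_contra hlt
      push_neg at hlt
      have hcof : #{x : κ.ord.ToType // typein ((· < ·) : κ.ord.ToType → κ.ord.ToType → Prop) x ∈ S} < κ.ord.cof := by
        rwa [hreg.cof_eq]
      have hsup := Ordinal.iSup_lt_ord hcof
        (f := fun x : {x : κ.ord.ToType // typein ((· < ·) : κ.ord.ToType → κ.ord.ToType → Prop) x ∈ S} => typein ((· < ·) : κ.ord.ToType → κ.ord.ToType → Prop) x.1)
        (fun x => typein_lt_self x.1)
      set b := ⨆ x : {x : κ.ord.ToType // typein ((· < ·) : κ.ord.ToType → κ.ord.ToType → Prop) x ∈ S}, typein ((· < ·) : κ.ord.ToType → κ.ord.ToType → Prop) x.1 with hb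
      obtain ⟨q, hqS, hq⟩ := hSunb _ (holim.succ_lt hsup)
      have hqlt : q < κ.ord := hSlt q hqS
      have hx : typein ((· < ·) : κ.ord.ToType → κ.ord.ToType → Prop) (enum ((· < ·) : κ.ord.ToType → κ.ord.ToType → Prop) ⟨q, henlt q hqlt⟩) ∈ S := by
        rw [typein_enum]
        exact hqS
      have hle : typein ((· < ·) : κ.ord.ToType → κ.ord.ToType → Prop) (enum ((· < ·) : κ.ord.ToType → κ.ord.ToType → Prop) ⟨q, henlt q hqlt⟩) ≤ b :=
        Ordinal.le_iSup (fun x : {x : κ.ord.ToType // typein ((· < ·) : κ.ord.ToType → κ.ord.ToType → Prop) x ∈ S} => typein ((· < ·) : κ.ord.ToType → κ.ord.ToType → Prop) x.1)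
          ⟨_, hx⟩
      rw [typein_enum] at hle
      exact absurd (hq.trans hle) (Order.lt_succ b).not_ge
  · -- biorthogonality zero part
    intro a b' hne
    have hvne : a.1 ≠ b'.1 := fun h => hne (Subtype.ext h)
    rcases lt_or_gt_of_ne hvne with h | h
    · -- a.1 < b'.1 : use freeness
      by_contra hfne
      have hib : typein ((· < ·) : κ.ord.ToType → κ.ord.ToType → Prop) b'.1 < κ.ord := typein_lt_self b'.1
      have hmem : typein ((· < ·) : κ.ord.ToType → κ.ord.ToType → Prop) a.1 ∈ Fo (typein ((· < ·) : κ.ord.ToType → κ.ord.ToType → Prop) b'.1) := by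
        simp only [hFo, dif_pos hib]
        refine ⟨a.1, ⟨?_, ?_⟩, rfl⟩
        · rw [show enum ((· < ·) : κ.ord.ToType → κ.ord.ToType → Prop) ⟨typein ((· < ·) : κ.ord.ToType → κ.ord.ToType → Prop) b'.1, henlt _ hib⟩ = b'.1
            from enum_typein _ b'.1]
          exact h
        · rw [show enum ((· < ·) : κ.ord.ToType → κ.ord.ToType → Prop) ⟨typein ((· < ·) : κ.ord.ToType → κ.ord.ToType → Prop) b'.1, henlt _ hib⟩ = b'.1
            from enum_typein _ b'.1]
          exact hfne
      exact hSfree _ b'.2 _ a.2 hmem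
    · exact (hspecs a.1).2.2 b'.1 h
end

section
/- Let X be a separable real Banach space and let {(e_j, e*_j)}_{j∈ℕ} be an M-basis for X. Then every dense linear subspace Y of X contains a further linear subspace Y₀ that is dense in X and is linearly isomorphic (via a continuous linear bijection with continuous inverse) to the linear span of {e_j : j∈ℕ} with the induced norm. In particular, any two dense linear subspaces of X are densely isomorphic. -/
open Cardinal Ordinal TopologicalSpace

universe u v

section Aux

variable {X : Type*} [NormedAddCommGroup X] [NormedSpace ℝ X]

noncomputable def submoduleMapCLE (T : X ≃L[ℝ] X) (p : Submodule ℝ X) :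
    p ≃L[ℝ] (p.map (T.toLinearEquiv : X →ₗ[ℝ] X)) where
  toLinearEquiv := T.toLinearEquiv.submoduleMap p
  continuous_toFun := by
    refine continuous_induced_rng.2 ?_
    show Continuous fun x : p => ((T.toLinearEquiv.submoduleMap p) x : X)
    simp only [LinearEquiv.submoduleMap_apply]
    exact T.continuous.comp continuous_subtype_val
  continuous_invFun := by
    refine continuous_induced_rng.2 ?_
    show Continuous fun x : (p.map (T.toLinearEquiv : X →ₗ[ℝ] X)) =>
      (((T.toLinearEquiv.submoduleMap p).symm x : p) : X)
    simp only [LinearEquiv.submoduleMap_symm_apply]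
    exact T.symm.continuous.comp continuous_subtype_val

noncomputable def cleOfEq {p q : Submodule ℝ X} (h : p = q) : p ≃L[ℝ] q where
  toLinearEquiv := LinearEquiv.ofEq p q h
  continuous_toFun := by
    refine continuous_induced_rng.2 ?_
    show Continuous fun x : p => ((LinearEquiv.ofEq p q h) x : X)
    simp only [LinearEquiv.coe_ofEq_apply]
    exact continuous_subtype_val
  continuous_invFun := by
    refine continuous_induced_rng.2 ?_
    show Continuous fun x : q => (((LinearEquiv.ofEq p q h).symm x : p) : X)
    have : ∀ x : q, (((LinearEquiv.ofEq p q h).symm x : p) : X) = (x : X) := by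
      intro x; simp [LinearEquiv.ofEq_symm]
    simp only [this]
    exact continuous_subtype_val

noncomputable def comapCLE {p q : Submodule ℝ X} (h : p ≤ q) :
    (p.comap q.subtype) ≃L[ℝ] p where
  toLinearEquiv := Submodule.comapSubtypeEquivOfLe h
  continuous_toFun := by
    refine continuous_induced_rng.2 ?_
    show Continuous fun x : (p.comap q.subtype) => ((Submodule.comapSubtypeEquivOfLe h) x : X)
    simp only [Submodule.comapSubtypeEquivOfLe_apply_coe]
    exact continuous_subtype_val.comp continuous_subtype_val
  continuous_invFun := by
    refine continuous_induced_rng.2 ?_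
    refine continuous_induced_rng.2 ?_
    show Continuous fun x : p => ((((Submodule.comapSubtypeEquivOfLe h).symm x) : q) : X)
    have : ∀ x : p, ((((Submodule.comapSubtypeEquivOfLe h).symm x) : q) : X) = (x : X) := by
      intro x
      have := Submodule.comapSubtypeEquivOfLe_apply_coe h
        ((Submodule.comapSubtypeEquivOfLe h).symm x)
      simpa using this
    simp only [this]
    exact continuous_subtype_val

lemma dense_comap_of_dense {p q : Submodule ℝ X} (h : p ≤ q) (hd : Dense (p : Set X)) :
    Dense ((p.comap q.subtype : Submodule ℝ q) : Set q) := by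
  have hin : Topology.IsInducing (Subtype.val : q → X) := Topology.IsInducing.subtypeVal
  rw [dense_iff_closure_eq, hin.closure_eq_preimage_closure_image]
  have himg : (Subtype.val '' ((p.comap q.subtype : Submodule ℝ q) : Set q)) = (p : Set X) := by
    ext x
    constructor
    · rintro ⟨y, hy, rfl⟩; exact hy
    · intro hx; exact ⟨⟨x, h hx⟩, hx, rfl⟩
  rw [himg, hd.closure_eq, Set.preimage_univ]

end Aux

section Main
variable {X : Type*} [NormedAddCommGroup X] [NormedSpace ℝ X] [CompleteSpace X]

lemma key_lemma (e : ℕ → X) (f : ℕ → X →L[ℝ] ℝ)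
    (hb1 : ∀ α, f α (e α) = 1) (hb2 : ∀ α β, α ≠ β → f α (e β) = 0)
    (hd : Dense (Submodule.span ℝ (Set.range e) : Set X))
    (Y : Submodule ℝ X) (hY : Dense (Y : Set X)) :
    ∃ Y₀ : Submodule ℝ X, Y₀ ≤ Y ∧ Dense (Y₀ : Set X) ∧
      Nonempty (Y₀ ≃L[ℝ] Submodule.span ℝ (Set.range e)) := by
  classical
  set ε : ℕ → ℝ := fun j => (1/2 : ℝ)^(j+2) / (‖f j‖ + 1) with hε
  have hεpos : ∀ j, 0 < ε j := by
    intro j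
    apply _root_.div_pos (by positivity)
    positivity
  -- choose approximations in Y
  have hchoice : ∀ j : ℕ, ∃ y ∈ (Y : Set X), ‖e j - y‖ < ε j := by
    intro j
    have := (Metric.mem_closure_iff).1 (hY (e j)) (ε j) (hεpos j)
    obtain ⟨b, hb, hdist⟩ := this
    exact ⟨b, hb, by rwa [dist_eq_norm] at hdist⟩
  choose y hyY hyd using hchoice
  set d : ℕ → X := fun j => y j - e j with hdef
  have hdnorm : ∀ j, ‖d j‖ < ε j := by
    intro j; rw [hdef]; simpa [norm_sub_rev] using hyd j
  have hfd : ∀ j, ‖f j‖ * ‖d j‖ ≤ (1/2:ℝ)^(j+2) := by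
    intro j
    have h1 : ‖f j‖ * ‖d j‖ ≤ (‖f j‖ + 1) * ε j := by
      apply mul_le_mul (by linarith [norm_nonneg (f j)]) (le_of_lt (hdnorm j))
        (norm_nonneg _) (by positivity)
    have h2 : (‖f j‖ + 1) * ε j = (1/2:ℝ)^(j+2) := by
      rw [hε]
      field_simp
    linarith
  have hbound : ∀ x : X, ∀ j, ‖f j x • d j‖ ≤ ‖x‖ * (1/2:ℝ)^(j+2) := by
    intro x j
    rw [norm_smul]
    calc ‖f j x‖ * ‖d j‖ ≤ (‖f j‖ * ‖x‖) * ‖d j‖ := by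
          apply mul_le_mul_of_nonneg_right ((f j).le_opNorm x) (norm_nonneg _)
      _ = ‖x‖ * (‖f j‖ * ‖d j‖) := by ring
      _ ≤ ‖x‖ * (1/2:ℝ)^(j+2) := by
          apply mul_le_mul_of_nonneg_left (hfd j) (norm_nonneg _)
  have hsumgeo : Summable (fun j : ℕ => (1/2:ℝ)^(j+2)) := by
    apply Summable.comp_injective (summable_geometric_of_lt_one (by norm_num) (by norm_num))
      (add_left_injective 2)
  have hsummable : ∀ x : X, Summable (fun j => f j x • d j) := by
    intro x
    apply Summable.of_norm_bounded (g := fun j => ‖x‖ * (1/2:ℝ)^(j+2)) (hsumgeo.mul_left _)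
      (hbound x)
  -- the perturbation operator
  set Slin : X →ₗ[ℝ] X :=
    { toFun := fun x => ∑' j, f j x • d j
      map_add' := by
        intro a b
        simp only [map_add, add_smul]
        exact Summable.tsum_add (hsummable a) (hsummable b)
      map_smul' := by
        intro c x
        simp only [map_smul, RingHom.id_apply]
        rw [tsum_congr (fun j => smul_assoc c ((f j) x) (d j))]
        exact Summable.tsum_const_smul c (hsummable x) } with hSlin
  have hgeosum : ∑' j : ℕ, (1/2:ℝ)^(j+2) = 1/2 := by
    have h1 : ∀ j : ℕ, (1/2:ℝ)^(j+2) = (1/2:ℝ)^j * (1/4) := by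
      intro j; rw [pow_add]; norm_num
    rw [tsum_congr h1, tsum_mul_right, tsum_geometric_of_lt_one (by norm_num) (by norm_num)]
    norm_num
  have hSbound : ∀ x : X, ‖Slin x‖ ≤ (1/2) * ‖x‖ := by
    intro x
    have hnorm : Summable (fun j => ‖f j x • d j‖) :=
      Summable.of_nonneg_of_le (fun j => norm_nonneg _) (hbound x) (hsumgeo.mul_left _)
    have h1 : ‖Slin x‖ ≤ ∑' j, ‖f j x • d j‖ := norm_tsum_le_tsum_norm hnorm
    have h2 : ∑' j, ‖f j x • d j‖ ≤ ∑' j, ‖x‖ * (1/2:ℝ)^(j+2) := by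
      apply Summable.tsum_le_tsum (hbound x) hnorm (hsumgeo.mul_left _)
    have h3 : ∑' j : ℕ, ‖x‖ * (1/2:ℝ)^(j+2) = (1/2) * ‖x‖ := by
      rw [tsum_mul_left, hgeosum]; ring
    linarith
  set S : X →L[ℝ] X := Slin.mkContinuous (1/2) hSbound with hS
  have hSapp : ∀ x, S x = ∑' j, f j x • d j := fun x => rfl
  have hSnorm : ‖S‖ ≤ 1/2 := LinearMap.mkContinuous_norm_le _ (by norm_num) _
  -- T = 1 + S is invertible
  have hu : ‖(-S : X →L[ℝ] X)‖ < 1 := by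
    rw [norm_neg]; linarith
  set u : (X →L[ℝ] X)ˣ := Units.oneSub (-S) hu with hudef
  set T : X ≃L[ℝ] X := ContinuousLinearEquiv.unitsEquiv ℝ X u with hT
  have hTapp : ∀ x, T x = x + S x := by
    intro x
    rw [hT, ContinuousLinearEquiv.unitsEquiv_apply]
    show ((1 : X →L[ℝ] X) - (-S)) x = x + S x
    simp [sub_neg_eq_add]
  have hTe : ∀ j, T (e j) = y j := by
    intro j
    rw [hTapp, hSapp]
    have : ∑' i, f i (e j) • d i = d j := by
      rw [tsum_eq_single j fun i hij => by rw [hb2 i j hij, zero_smul]]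
      rw [hb1 j, one_smul]
    rw [this]
    show e j + (y j - e j) = y j
    abel
  set p := Submodule.span ℝ (Set.range e) with hp
  set Y₀ := Submodule.span ℝ (Set.range y) with hY₀
  have hmap : p.map (T.toLinearEquiv : X →ₗ[ℝ] X) = Y₀ := by
    have hre : Set.range (((T.toLinearEquiv : X →ₗ[ℝ] X) : X → X) ∘ e) = Set.range y := by
      apply congrArg Set.range
      funext j
      show T (e j) = y j
      exact hTe j
    rw [hp, Submodule.map_span, ← Set.range_comp, hre, hY₀]
  refine ⟨Y₀, ?_, ?_, ?_⟩
  · rw [hY₀, Submodule.span_le]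
    rintro _ ⟨j, rfl⟩
    exact hyY j
  · have hcoe : (Y₀ : Set X) = T '' (p : Set X) := by
      rw [← hmap]; rfl
    rw [dense_iff_closure_eq, hcoe]
    have := T.toHomeomorph.image_closure (p : Set X)
    rw [← ContinuousLinearEquiv.coe_toHomeomorph] at *
    rw [← this, hd.closure_eq, Set.image_univ, Homeomorph.range_coe]
  · exact ⟨((cleOfEq hmap).symm).trans (submoduleMapCLE T p).symm⟩

end Main

/-- In a separable Banach space with an M-basis `{(e j, f j)}`, every dense
linear subspace contains a further dense linear subspace isomorphic to `span {e j}`;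
in particular any two dense linear subspaces are densely isomorphic. -/
theorem statement5 {X : Type u} [NormedAddCommGroup X] [NormedSpace ℝ X] [CompleteSpace X]
    [SeparableSpace X] (e : ℕ → X) (f : ℕ → X →L[ℝ] ℝ) (hM : IsMBasis e f) :
    (∀ Y : Submodule ℝ X, Dense (Y : Set X) →
      ∃ Y₀ : Submodule ℝ X, Y₀ ≤ Y ∧ Dense (Y₀ : Set X) ∧
        Nonempty (Y₀ ≃L[ℝ] Submodule.span ℝ (Set.range e))) ∧
    (∀ Y Z : Submodule ℝ X, Dense (Y : Set X) → Dense (Z : Set X) →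
      DenselyIsomorphic Y Z) := by
  obtain ⟨⟨hb1, hb2⟩, hd, _⟩ := hM
  have key := fun Y hY => key_lemma e f hb1 hb2 hd Y hY
  refine ⟨key, ?_⟩
  intro Y Z hYd hZd
  obtain ⟨Y₀, hY₀Y, hY₀d, ⟨gY⟩⟩ := key Y hYd
  obtain ⟨Z₀, hZ₀Z, hZ₀d, ⟨gZ⟩⟩ := key Z hZd
  refine ⟨Y₀.comap Y.subtype, Z₀.comap Z.subtype,
    dense_comap_of_dense hY₀Y hY₀d, dense_comap_of_dense hZ₀Z hZ₀d,
    ⟨((comapCLE hY₀Y).trans gY).trans (((comapCLE hZ₀Z).trans gZ).symm)⟩⟩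
end

section
/- Two separable real normed spaces X and Y are densely isomorphic if and only if their completions are linearly isomorphic, i.e., there exists a continuous linear bijection with continuous inverse between the completion of X and the completion of Y. -/
open Cardinal Ordinal TopologicalSpace

universe u v

section Aux
open Set Submodule UniformSpace

lemma aux_fwd {X : Type u} {Y : Type v} [NormedAddCommGroup X] [NormedSpace ℝ X]
    [NormedAddCommGroup Y] [NormedSpace ℝ Y]
    (X₀ : Submodule ℝ X) (Y₀ : Submodule ℝ Y) (hX : Dense (X₀ : Set X))
    (hY : Dense (Y₀ : Set Y)) (f : X₀ ≃L[ℝ] Y₀) :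
    Nonempty (Completion X ≃L[ℝ] Completion Y) := by
  have hvalX : DenseRange (Subtype.val : X₀ → X) := by
    rw [denseRange_iff_closure_range, Subtype.range_coe]
    exact hX.closure_eq
  have hvalY : DenseRange (Subtype.val : Y₀ → Y) := by
    rw [denseRange_iff_closure_range, Subtype.range_coe]
    exact hY.closure_eq
  set eX : X₀ →L[ℝ] Completion X := Completion.toComplL.comp X₀.subtypeL with heX
  set eY : Y₀ →L[ℝ] Completion Y := Completion.toComplL.comp Y₀.subtypeL with heY
  have hdX : DenseRange eX := by
    have : DenseRange (((↑) : X → Completion X) ∘ (Subtype.val : X₀ → X)) :=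
      Completion.denseRange_coe.comp hvalX (Completion.continuous_coe _)
    simpa [heX, ContinuousLinearMap.coe_comp', Completion.coe_toComplL] using this
  have hdY : DenseRange eY := by
    have : DenseRange (((↑) : Y → Completion Y) ∘ (Subtype.val : Y₀ → Y)) :=
      Completion.denseRange_coe.comp hvalY (Completion.continuous_coe _)
    simpa [heY, ContinuousLinearMap.coe_comp', Completion.coe_toComplL] using this
  have hiX : IsUniformInducing eX := by
    have : Isometry (((↑) : X → Completion X) ∘ (Subtype.val : X₀ → X)) :=
      Completion.coe_isometry.comp isometry_subtype_coe
    refine Isometry.isUniformInducing ?_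
    simpa [heX, ContinuousLinearMap.coe_comp', Completion.coe_toComplL] using this
  have hiY : IsUniformInducing eY := by
    have : Isometry (((↑) : Y → Completion Y) ∘ (Subtype.val : Y₀ → Y)) :=
      Completion.coe_isometry.comp isometry_subtype_coe
    refine Isometry.isUniformInducing ?_
    simpa [heY, ContinuousLinearMap.coe_comp', Completion.coe_toComplL] using this
  set g : X₀ →L[ℝ] Completion Y := eY.comp (f : X₀ →L[ℝ] Y₀) with hg
  set h : Y₀ →L[ℝ] Completion X := eX.comp (f.symm : Y₀ →L[ℝ] X₀) with hh
  set G : Completion X →L[ℝ] Completion Y := g.extend eX with hG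
  set H : Completion Y →L[ℝ] Completion X := h.extend eY with hH
  have hGe : ∀ x : X₀, G (eX x) = eY (f x) := fun x => by
    rw [hG, ContinuousLinearMap.extend_eq (h_dense := hdX) (h_e := hiX)]; rfl
  have hHe : ∀ y : Y₀, H (eY y) = eX (f.symm y) := fun y => by
    rw [hH, ContinuousLinearMap.extend_eq (h_dense := hdY) (h_e := hiY)]; rfl
  have h1 : Function.LeftInverse H G := by
    intro z
    refine hdX.induction_on z ?_ ?_
    · exact isClosed_eq ((H.continuous).comp G.continuous) continuous_id
    · intro x
      rw [hGe, hHe, ContinuousLinearEquiv.symm_apply_apply]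
  have h2 : Function.RightInverse H G := by
    intro z
    refine hdY.induction_on z ?_ ?_
    · exact isClosed_eq ((G.continuous).comp H.continuous) continuous_id
    · intro y
      rw [hHe, hGe, ContinuousLinearEquiv.apply_symm_apply]
  exact ⟨ContinuousLinearEquiv.equivOfInverse G H h1 h2⟩

section Biorth

variable {Z : Type*} [NormedAddCommGroup Z] [NormedSpace ℝ Z] [CompleteSpace Z]

omit [NormedAddCommGroup Z] [NormedSpace ℝ Z] [CompleteSpace Z] in
lemma range_snoc_eq {n : ℕ} (E : Fin n → Z) (v : Z) :
    Set.range (Fin.snoc E v : Fin (n+1) → Z) = insert v (Set.range E) := by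
  ext z
  constructor
  · rintro ⟨i, rfl⟩
    refine Fin.lastCases ?_ ?_ i
    · simp [Fin.snoc_last]
    · intro j; right; exact ⟨j, by simp [Fin.snoc_castSucc]⟩
  · rintro (rfl | ⟨j, rfl⟩)
    · exact ⟨Fin.last n, by simp [Fin.snoc_last]⟩
    · exact ⟨j.castSucc, by simp [Fin.snoc_castSucc]⟩

/-- One-step extension of a biorthogonal system inside a dense subspace. -/
lemma step_exists (hinf : ¬ FiniteDimensional ℝ Z)
    {A : Submodule ℝ Z} (hA : Dense (A : Set Z)) {x0 : Z} (hx0A : x0 ∈ A)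
    {n : ℕ} (E : Fin n → Z) (Φ : Fin n → Z →L[ℝ] ℝ)
    (hEA : ∀ i, E i ∈ A) (hb1 : ∀ i, Φ i (E i) = 1)
    (hb0 : ∀ i j, i ≠ j → Φ i (E j) = 0) :
    ∃ (v : Z) (ψ : Z →L[ℝ] ℝ),
      v ∈ A ∧ ψ v = 1 ∧ (∀ i, Φ i v = 0) ∧ (∀ i, ψ (E i) = 0) ∧
      x0 ∈ Submodule.span ℝ (insert v (Set.range E)) := by
  set S : Submodule ℝ Z := Submodule.span ℝ (Set.range E) with hS
  have hfd : FiniteDimensional ℝ S := FiniteDimensional.span_of_finite ℝ (Set.finite_range E)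
  have hSclosed : IsClosed (S : Set Z) := Submodule.closed_of_finiteDimensional S
  have hSne : ((S : Set Z)ᶜ).Nonempty := by
    by_contra h
    rw [Set.not_nonempty_iff_eq_empty, Set.compl_empty_iff] at h
    have htop : S = ⊤ := by
      apply Submodule.eq_top_iff'.2
      intro x; rw [← SetLike.mem_coe, h]; trivial
    have : FiniteDimensional ℝ (⊤ : Submodule ℝ Z) := htop ▸ hfd
    exact hinf (Submodule.topEquiv.finiteDimensional)
  obtain ⟨x, hxA, hxS, hx0span⟩ :
      ∃ x, x ∈ A ∧ x ∉ S ∧ x0 ∈ Submodule.span ℝ (insert x (Set.range E)) := by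
    by_cases hx0 : x0 ∈ S
    · obtain ⟨x, hxA, hxS⟩ := hA.exists_mem_open hSclosed.isOpen_compl hSne
      exact ⟨x, hxA, hxS, Submodule.span_mono (Set.subset_insert _ _) hx0⟩
    · exact ⟨x0, hx0A, hx0, Submodule.subset_span (Set.mem_insert _ _)⟩
  set s : Z := ∑ i, Φ i x • E i with hs
  have hsS : s ∈ S := Submodule.sum_mem _ fun i _ =>
    Submodule.smul_mem _ _ (Submodule.subset_span ⟨i, rfl⟩)
  set v : Z := x - s with hv
  have hvA : v ∈ A :=
    A.sub_mem hxA (Submodule.sum_mem _ fun i _ => A.smul_mem _ (hEA i))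
  have hvne : v ≠ 0 := by
    intro h
    exact hxS (by rw [hv, sub_eq_zero] at h; rw [h]; exact hsS)
  have hΦv : ∀ i, Φ i v = 0 := by
    intro i
    rw [hv, map_sub, hs, map_sum]
    rw [Finset.sum_eq_single i
      (fun j _ hji => by rw [map_smul, hb0 i j fun h => hji h.symm, _root_.smul_eq_mul, mul_zero])
      (by simp)]
    rw [map_smul, hb1 i, _root_.smul_eq_mul, mul_one, _root_.sub_self]
  obtain ⟨g, hg1, hgv⟩ := exists_dual_vector ℝ v (norm_ne_zero_iff.2 hvne)
  set ψ1 : Z →L[ℝ] ℝ := ‖v‖⁻¹ • g with hψ1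
  have hψ1v : ψ1 v = 1 := by
    rw [hψ1, ContinuousLinearMap.smul_apply, hgv, _root_.smul_eq_mul]
    exact inv_mul_cancel₀ (norm_ne_zero_iff.2 hvne)
  set ψ : Z →L[ℝ] ℝ := ψ1 - ∑ i, ψ1 (E i) • Φ i with hψ
  have hψE : ∀ j, ψ (E j) = 0 := by
    intro j
    rw [hψ, ContinuousLinearMap.sub_apply, ContinuousLinearMap.sum_apply]
    rw [Finset.sum_eq_single j
      (fun i _ hij => by
        simp only [ContinuousLinearMap.smul_apply, _root_.smul_eq_mul]
        rw [hb0 i j hij, mul_zero])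
      (by simp)]
    simp only [ContinuousLinearMap.smul_apply, _root_.smul_eq_mul]
    rw [hb1 j, mul_one, _root_.sub_self]
  have hψv : ψ v = 1 := by
    rw [hψ, ContinuousLinearMap.sub_apply, ContinuousLinearMap.sum_apply]
    have : ∀ i ∈ Finset.univ, (ψ1 (E i) • Φ i) v = (0:ℝ) := fun i _ => by
      simp only [ContinuousLinearMap.smul_apply, _root_.smul_eq_mul]
      rw [hΦv i, mul_zero]
    rw [Finset.sum_congr rfl this, Finset.sum_const, smul_zero, _root_.sub_zero, hψ1v]
  refine ⟨v, ψ, hvA, hψv, hΦv, hψE, ?_⟩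
  have hle : Submodule.span ℝ (insert x (Set.range E)) ≤
      Submodule.span ℝ (insert v (Set.range E)) := by
    rw [Submodule.span_le]
    rintro z (rfl | hz)
    · have hvmem : v ∈ Submodule.span ℝ (insert v (Set.range E)) :=
        Submodule.subset_span (Set.mem_insert _ _)
      have hsmem : s ∈ Submodule.span ℝ (insert v (Set.range E)) :=
        Submodule.span_mono (Set.subset_insert _ _) hsS
      have : z = v + s := by rw [hv]; abel
      rw [this]; exact Submodule.add_mem _ hvmem hsmem
    · exact Submodule.subset_span (Set.mem_insert_of_mem _ hz)
  exact hle hx0span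

/-- The invariant carried through the recursion. -/
def BiorthInv (A : Submodule ℝ Z) (d : ℕ → Z) (n : ℕ)
    (p : (Fin n → Z) × (Fin n → Z →L[ℝ] ℝ)) : Prop :=
  (∀ i, p.1 i ∈ A) ∧ (∀ i, p.2 i (p.1 i) = 1) ∧ (∀ i j, i ≠ j → p.2 i (p.1 j) = 0) ∧
    ∀ k : ℕ, k < n → d k ∈ Submodule.span ℝ (Set.range p.1)

lemma step_exists' (hinf : ¬ FiniteDimensional ℝ Z)
    {A : Submodule ℝ Z} (hA : Dense (A : Set Z)) {d : ℕ → Z} (hd : ∀ n, d n ∈ A)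
    (n : ℕ) (p : (Fin n → Z) × (Fin n → Z →L[ℝ] ℝ)) (hp : BiorthInv A d n p) :
    ∃ q : (Fin (n+1) → Z) × (Fin (n+1) → Z →L[ℝ] ℝ), BiorthInv A d (n+1) q ∧
      ∀ i : Fin n, q.1 i.castSucc = p.1 i ∧ q.2 i.castSucc = p.2 i := by
  obtain ⟨v, ψ, hvA, hψv, hΦv, hψE, hcov⟩ :=
    step_exists hinf hA (hd n) p.1 p.2 hp.1 hp.2.1 hp.2.2.1
  refine ⟨(Fin.snoc p.1 v, Fin.snoc p.2 ψ), ⟨?_, ?_, ?_, ?_⟩,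
    fun i => ⟨by simp [Fin.snoc_castSucc], by simp [Fin.snoc_castSucc]⟩⟩
  · intro i
    refine Fin.lastCases ?_ ?_ i
    · simpa [Fin.snoc_last] using hvA
    · intro j; simpa [Fin.snoc_castSucc] using hp.1 j
  · intro i
    refine Fin.lastCases ?_ ?_ i
    · simpa [Fin.snoc_last] using hψv
    · intro j; simpa [Fin.snoc_castSucc] using hp.2.1 j
  · intro i j hij
    rcases Fin.eq_castSucc_or_eq_last i with ⟨i', rfl⟩ | rfl <;>
      rcases Fin.eq_castSucc_or_eq_last j with ⟨j', rfl⟩ | rfl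
    · have : i' ≠ j' := fun h => hij (by rw [h])
      simpa [Fin.snoc_castSucc] using hp.2.2.1 i' j' this
    · simpa [Fin.snoc_last, Fin.snoc_castSucc] using hΦv i'
    · simpa [Fin.snoc_last, Fin.snoc_castSucc] using hψE j'
    · exact absurd rfl hij
  · intro k hk
    rw [show (Fin.snoc p.1 v : Fin (n+1) → Z) = Fin.snoc p.1 v from rfl, range_snoc_eq]
    rcases Nat.lt_succ_iff_lt_or_eq.1 hk with hk' | rfl
    · exact Submodule.span_mono (Set.subset_insert _ _) (hp.2.2.2 k hk')
    · exact hcov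

/-- The recursively constructed stages. -/
noncomputable def stages (hinf : ¬ FiniteDimensional ℝ Z)
    {A : Submodule ℝ Z} (hA : Dense (A : Set Z)) {d : ℕ → Z} (hd : ∀ n, d n ∈ A) :
    ∀ n : ℕ, {p : (Fin n → Z) × (Fin n → Z →L[ℝ] ℝ) // BiorthInv A d n p} := fun n =>
  Nat.rec
    ⟨(Fin.elim0, Fin.elim0),
      ⟨fun i => i.elim0, fun i => i.elim0, fun i => i.elim0,
        fun k hk => absurd hk (Nat.not_lt_zero k)⟩⟩
    (fun n p =>
      ⟨Classical.choose (step_exists' hinf hA hd n p.1 p.2),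
        (Classical.choose_spec (step_exists' hinf hA hd n p.1 p.2)).1⟩) n

lemma stages_coh (hinf : ¬ FiniteDimensional ℝ Z)
    {A : Submodule ℝ Z} (hA : Dense (A : Set Z)) {d : ℕ → Z} (hd : ∀ n, d n ∈ A)
    (n : ℕ) (i : Fin n) :
    (stages hinf hA hd (n+1)).1.1 i.castSucc = (stages hinf hA hd n).1.1 i ∧
      (stages hinf hA hd (n+1)).1.2 i.castSucc = (stages hinf hA hd n).1.2 i :=
  (Classical.choose_spec (step_exists' hinf hA hd n (stages hinf hA hd n).1
    (stages hinf hA hd n).2)).2 i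

/-- Existence of a biorthogonal sequence in `A` whose span contains every `d k`. -/
lemma exists_biorth (hinf : ¬ FiniteDimensional ℝ Z)
    {A : Submodule ℝ Z} (hA : Dense (A : Set Z)) {d : ℕ → Z} (hd : ∀ n, d n ∈ A) :
    ∃ (e : ℕ → Z) (φ : ℕ → Z →L[ℝ] ℝ),
      (∀ n, e n ∈ A) ∧ (∀ n, φ n (e n) = 1) ∧ (∀ m n, m ≠ n → φ m (e n) = 0) ∧
      ∀ k, d k ∈ Submodule.span ℝ (Set.range e) := by
  set st := stages hinf hA hd with hst
  set e : ℕ → Z := fun n => (st (n+1)).1.1 (Fin.last n) with he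
  set φ : ℕ → Z →L[ℝ] ℝ := fun n => (st (n+1)).1.2 (Fin.last n) with hφ
  have compat : ∀ n (i : Fin n), (st n).1.1 i = e (i : ℕ) ∧ (st n).1.2 i = φ (i : ℕ) := by
    intro n
    induction n with
    | zero => exact fun i => i.elim0
    | succ n ih =>
      intro i
      rcases Fin.eq_castSucc_or_eq_last i with ⟨j, rfl⟩ | rfl
      · have hcoh := stages_coh hinf hA hd n j
        rw [← hst] at hcoh
        constructor
        · rw [hcoh.1, (ih j).1, Fin.coe_castSucc]
        · rw [hcoh.2, (ih j).2, Fin.coe_castSucc]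
      · constructor
        · rw [he]; simp [Fin.val_last]
        · rw [hφ]; simp [Fin.val_last]
  refine ⟨e, φ, ?_, ?_, ?_, ?_⟩
  · intro n
    have := (st (n+1)).2.1 (Fin.last n)
    rwa [(compat (n+1) (Fin.last n)).1, Fin.val_last] at this
  · intro n
    have := (st (n+1)).2.2.1 (Fin.last n)
    rwa [(compat (n+1) (Fin.last n)).1, (compat (n+1) (Fin.last n)).2, Fin.val_last] at this
  · intro m n hmn
    set N := max m n + 1 with hN
    have hm : m < N := lt_of_le_of_lt (le_max_left m n) (Nat.lt_succ_self _)
    have hn : n < N := lt_of_le_of_lt (le_max_right m n) (Nat.lt_succ_self _)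
    have := (st N).2.2.2.1 ⟨m, hm⟩ ⟨n, hn⟩ (fun h => hmn (congrArg Fin.val h))
    rwa [(compat N ⟨m, hm⟩).2, (compat N ⟨n, hn⟩).1] at this
  · intro k
    have := (st (k+1)).2.2.2.2 k (Nat.lt_succ_self k)
    refine Submodule.span_mono ?_ this
    rintro z ⟨i, rfl⟩
    exact ⟨(i : ℕ), ((compat (k+1) i).1).symm⟩

end Biorth

section Key

variable {Z : Type*} [NormedAddCommGroup Z] [NormedSpace ℝ Z] [CompleteSpace Z]

open TopologicalSpace in
/-- **Key perturbation lemma**: in a separable Banach space, given two dense subspaces `A` `B`,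
there is an automorphism `U` and a dense subspace `A₀ ≤ A` with `U(A₀) ⊆ B`. -/
lemma key_perturb [SeparableSpace Z] (A B : Submodule ℝ Z)
    (hA : Dense (A : Set Z)) (hB : Dense (B : Set Z)) :
    ∃ (U : Z ≃L[ℝ] Z) (A₀ : Submodule ℝ Z),
      A₀ ≤ A ∧ Dense (A₀ : Set Z) ∧ ∀ x ∈ A₀, U x ∈ B := by
  by_cases hfin : FiniteDimensional ℝ Z
  · have hAt : A = ⊤ := by
      have hclosed : IsClosed (A : Set Z) := Submodule.closed_of_finiteDimensional A
      apply Submodule.eq_top_iff'.2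
      intro x
      have : (A : Set Z) = Set.univ := by rw [← hclosed.closure_eq, hA.closure_eq]
      rw [← SetLike.mem_coe, this]; trivial
    have hBt : B = ⊤ := by
      have hclosed : IsClosed (B : Set Z) := Submodule.closed_of_finiteDimensional B
      apply Submodule.eq_top_iff'.2
      intro x
      have : (B : Set Z) = Set.univ := by rw [← hclosed.closure_eq, hB.closure_eq]
      rw [← SetLike.mem_coe, this]; trivial
    refine ⟨ContinuousLinearEquiv.refl ℝ Z, ⊤, hAt ▸ le_refl _, ?_, ?_⟩
    · rw [Submodule.top_coe]; exact dense_univ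
    · intro x _; rw [hBt]; trivial
  -- get a dense sequence inside A
  obtain ⟨t, htA, htc, hAt⟩ :=
    (IsSeparable.of_separableSpace (A : Set Z)).exists_countable_dense_subset
  obtain ⟨d, hd_eq⟩ := (htc.insert (0:Z)).exists_eq_range (Set.insert_nonempty _ _)
  have hdA : ∀ n, d n ∈ A := by
    intro n
    have : d n ∈ insert (0:Z) t := hd_eq ▸ Set.mem_range_self n
    rcases this with h | h
    · rw [h]; exact A.zero_mem
    · exact htA h
  have hdense : Dense (Set.range d) := by
    rw [dense_iff_closure_eq]
    apply Set.eq_univ_of_univ_subset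
    rw [← hA.closure_eq]
    have h1 : (A : Set Z) ⊆ closure (Set.range d) := by
      refine subset_trans hAt (closure_mono ?_)
      rw [← hd_eq]; exact Set.subset_insert _ _
    calc closure (A : Set Z) ⊆ closure (closure (Set.range d)) := closure_mono h1
      _ = closure (Set.range d) := closure_closure
  -- biorthogonal sequence
  obtain ⟨e, φ, heA, hb1, hb0, hcov⟩ := exists_biorth hfin hA hdA
  -- choose b n ∈ B close to e n
  have hδpos : ∀ n : ℕ, (0:ℝ) < (1/2)^(n+2) / (‖φ n‖ + 1) := fun n =>
    div_pos (by positivity) (by positivity)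
  have hbex : ∀ n : ℕ, ∃ y ∈ B, ‖y - e n‖ < (1/2)^(n+2) / (‖φ n‖ + 1) := by
    intro n
    obtain ⟨y, hyB, hy⟩ := Metric.mem_closure_iff.1 (hB (e n)) _ (hδpos n)
    exact ⟨y, hyB, by rwa [← dist_eq_norm, dist_comm]⟩
  choose b hbB hbe using hbex
  -- the perturbation operator
  set K : ℕ → Z →L[ℝ] Z := fun n => (φ n).smulRight (b n - e n) with hK
  have hKbound : ∀ n, ‖K n‖ ≤ (1/2:ℝ)^(n+2) := by
    intro n
    rw [hK]
    rw [ContinuousLinearMap.norm_smulRight_apply]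
    have h1 : ‖φ n‖ * ‖b n - e n‖ ≤ (‖φ n‖ + 1) * ((1/2)^(n+2) / (‖φ n‖ + 1)) := by
      apply mul_le_mul (by linarith [norm_nonneg (φ n)]) (le_of_lt (hbe n))
        (norm_nonneg _) (by positivity)
    refine h1.trans (le_of_eq ?_)
    field_simp
  have hgeo : Summable (fun n : ℕ => (1/2:ℝ)^(n+2)) := by
    have := (summable_geometric_of_lt_one (by norm_num : (0:ℝ) ≤ 1/2) (by norm_num)).mul_left
      ((1/2:ℝ)^2)
    refine this.congr fun n => ?_
    rw [← pow_add]; ring_nf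
  have hKsum : Summable K := Summable.of_norm_bounded hgeo hKbound
  have hKnormsum : Summable (fun n => ‖K n‖) :=
    Summable.of_nonneg_of_le (fun n => norm_nonneg _) hKbound hgeo
  set Kt : Z →L[ℝ] Z := ∑' n, K n with hKinf
  have hKlt : ‖Kt‖ < 1 := by
    have h1 : ‖Kt‖ ≤ ∑' n, ‖K n‖ := norm_tsum_le_tsum_norm hKnormsum
    have h2 : ∑' n, ‖K n‖ ≤ ∑' n : ℕ, (1/2:ℝ)^(n+2) := Summable.tsum_le_tsum hKbound hKnormsum hgeo
    have h3 : ∑' n : ℕ, (1/2:ℝ)^(n+2) = 1/2 := by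
      have : ∀ n : ℕ, (1/2:ℝ)^(n+2) = (1/4) * (1/2)^n := fun n => by rw [pow_add]; ring
      rw [tsum_congr this, tsum_mul_left,
        tsum_geometric_of_lt_one (by norm_num : (0:ℝ) ≤ 1/2) (by norm_num)]
      norm_num
    linarith
  have hKneg : ‖-Kt‖ < 1 := by rwa [norm_neg]
  set U : Z ≃L[ℝ] Z := ContinuousLinearEquiv.ofUnit (Units.oneSub (-Kt) hKneg) with hU
  have hUx : ∀ x, U x = x + Kt x := by
    intro x
    show ((Units.oneSub (-Kt) hKneg).val) x = x + Kt x
    show ((1 : Z →L[ℝ] Z) - (-Kt)) x = x + Kt x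
    rw [sub_neg_eq_add, ContinuousLinearMap.add_apply, ContinuousLinearMap.one_apply]
  have hUe : ∀ n, U (e n) = b n := by
    intro n
    rw [hUx]
    have h1 : Kt (e n) = ∑' m, K m (e n) := by
      have := (ContinuousLinearMap.apply ℝ Z (e n)).map_tsum hKsum
      simpa [ContinuousLinearMap.apply_apply] using this
    have h2 : ∑' m, K m (e n) = b n - e n := by
      rw [tsum_eq_single n]
      · rw [hK]; simp only [ContinuousLinearMap.smulRight_apply]
        rw [hb1 n, one_smul]
      · intro m hm
        rw [hK]; simp only [ContinuousLinearMap.smulRight_apply]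
        rw [hb0 m n hm, zero_smul]
    rw [h1, h2]; abel
  refine ⟨U, Submodule.span ℝ (Set.range e), ?_, ?_, ?_⟩
  · rw [Submodule.span_le]; rintro z ⟨n, rfl⟩; exact heA n
  · have hsub : Set.range d ⊆ (Submodule.span ℝ (Set.range e) : Set Z) := by
      rintro z ⟨k, rfl⟩; exact hcov k
    exact hdense.mono hsub
  · intro x hx
    have hle : Submodule.span ℝ (Set.range e) ≤
        Submodule.comap ((U : Z →L[ℝ] Z) : Z →ₗ[ℝ] Z) B := by
      rw [Submodule.span_le]
      rintro z ⟨n, rfl⟩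
      simp only [Set.mem_preimage, SetLike.mem_coe, Submodule.comap_coe]
      show U (e n) ∈ B
      rw [hUe n]; exact hbB n
    exact hle hx

end Key

section Plumbing

variable {W : Type*} {Z : Type*} [NormedAddCommGroup W] [NormedSpace ℝ W]
  [NormedAddCommGroup Z] [NormedSpace ℝ Z]

/-- Pull back a submodule along an isometric linear embedding whose range contains it. -/
noncomputable def pullbackEquiv (ι : W →ₗ[ℝ] Z) (hι : Isometry ι) (M : Submodule ℝ Z)
    (hM : M ≤ LinearMap.range ι) : (M.comap ι) ≃L[ℝ] M := by
  have hmem : ∀ x ∈ M.comap ι, ι x ∈ M := fun x hx => hx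
  set f : (M.comap ι) →ₗ[ℝ] M := ι.restrict hmem with hf
  have hbij : Function.Bijective f := by
    constructor
    · intro a b hab
      apply Subtype.ext
      apply hι.injective
      exact congrArg Subtype.val hab
    · rintro ⟨m, hm⟩
      obtain ⟨w, hw⟩ := hM hm
      refine ⟨⟨w, by show ι w ∈ M; rw [hw]; exact hm⟩, ?_⟩
      exact Subtype.ext hw
  set le := LinearEquiv.ofBijective f hbij with hle
  refine { le with continuous_toFun := ?_, continuous_invFun := ?_ }
  · apply continuous_induced_rng.2
    exact hι.continuous.comp continuous_subtype_val
  · apply continuous_induced_rng.2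
    show Continuous (fun y : M => ((le.symm y : W)))
    rw [hι.isUniformInducing.isInducing.continuous_iff]
    have : (⇑ι ∘ fun y : M => ((le.symm y : W))) = fun y : M => (y : Z) := by
      funext y
      exact congrArg Subtype.val (le.apply_symm_apply y)
    rw [this]
    exact continuous_subtype_val

lemma pullbackEquiv_dense (ι : W →ₗ[ℝ] Z) (hι : Isometry ι) (M : Submodule ℝ Z)
    (hM : M ≤ LinearMap.range ι) (hMd : Dense (M : Set Z)) :
    Dense ((M.comap ι : Submodule ℝ W) : Set W) := by
  intro w
  rw [Metric.mem_closure_iff]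
  intro ε hε
  obtain ⟨z, hzM, hz⟩ := Metric.mem_closure_iff.1 (hMd (ι w)) ε hε
  obtain ⟨w', hw'⟩ := hM hzM
  refine ⟨w', ?_, ?_⟩
  · show ι w' ∈ M; rw [hw']; exact hzM
  · rw [← hι.dist_eq, hw']; exact hz

/-- Map a submodule through a continuous linear equivalence. -/
noncomputable def mapEquiv (S : Z ≃L[ℝ] W) (M : Submodule ℝ Z) :
    M ≃L[ℝ] M.map ((S : Z →L[ℝ] W) : Z →ₗ[ℝ] W) := by
  set Slin : Z →ₗ[ℝ] W := ((S : Z →L[ℝ] W) : Z →ₗ[ℝ] W) with hSlin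
  have hmem : ∀ x ∈ M, Slin x ∈ M.map Slin := fun x hx => Submodule.mem_map_of_mem hx
  set f : M →ₗ[ℝ] M.map Slin := Slin.restrict hmem with hf
  have hbij : Function.Bijective f := by
    constructor
    · intro a b hab
      apply Subtype.ext
      apply S.injective
      exact congrArg Subtype.val hab
    · rintro ⟨y, x, hx, rfl⟩
      exact ⟨⟨x, hx⟩, Subtype.ext rfl⟩
  set le := LinearEquiv.ofBijective f hbij with hle
  refine { le with continuous_toFun := ?_, continuous_invFun := ?_ }
  · apply continuous_induced_rng.2
    exact S.continuous.comp continuous_subtype_val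
  · apply continuous_induced_rng.2
    show Continuous (fun y : M.map Slin => ((le.symm y : M) : Z))
    have heq : (fun y : M.map Slin => ((le.symm y : M) : Z)) =
        fun y : M.map Slin => S.symm (y : W) := by
      funext y
      have h2 : S ((le.symm y : M) : Z) = (y : W) :=
        congrArg Subtype.val (le.apply_symm_apply y)
      rw [← h2, ContinuousLinearEquiv.symm_apply_apply]
    rw [heq]
    exact S.symm.continuous.comp continuous_subtype_val

lemma dense_image_homeomorph {s : Set Z} (h : Z ≃ₜ W) (hs : Dense s) : Dense (h '' s) := by
  rw [dense_iff_closure_eq, ← Homeomorph.image_closure, hs.closure_eq, Set.image_univ]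
  exact h.surjective.range_eq

end Plumbing

end Aux

open UniformSpace in
/-- Two separable real normed spaces are densely isomorphic if and only if
their completions are linearly isomorphic. -/
theorem statement6 {X : Type u} {Y : Type v} [NormedAddCommGroup X] [NormedSpace ℝ X]
    [NormedAddCommGroup Y] [NormedSpace ℝ Y]
    [SeparableSpace X] [SeparableSpace Y] :
    DenselyIsomorphic X Y ↔
      Nonempty (UniformSpace.Completion X ≃L[ℝ] UniformSpace.Completion Y) := by
  constructor
  · rintro ⟨X₀, Y₀, hX₀, hY₀, ⟨f⟩⟩
    exact aux_fwd X₀ Y₀ hX₀ hY₀ f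
  · rintro ⟨T⟩
    letI : SeparableSpace (Completion X) :=
      (Completion.denseRange_coe (α := X)).separableSpace (Completion.continuous_coe X)
    set ιX : X →ₗ[ℝ] Completion X :=
      ((Completion.toComplL : X →L[ℝ] Completion X) : X →ₗ[ℝ] Completion X) with hιX
    set ιY : Y →ₗ[ℝ] Completion Y :=
      ((Completion.toComplL : Y →L[ℝ] Completion Y) : Y →ₗ[ℝ] Completion Y) with hιY
    have hιXiso : Isometry ⇑ιX := Completion.coe_isometry
    have hιYiso : Isometry ⇑ιY := Completion.coe_isometry
    set A : Submodule ℝ (Completion X) := LinearMap.range ιX with hA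
    have hAdense : Dense (A : Set (Completion X)) := by
      rw [hA, LinearMap.coe_range]
      exact Completion.denseRange_coe
    set Tlin : Completion X →ₗ[ℝ] Completion Y :=
      ((T : Completion X →L[ℝ] Completion Y) : Completion X →ₗ[ℝ] Completion Y) with hTlin
    set B : Submodule ℝ (Completion X) := (LinearMap.range ιY).comap Tlin with hB
    have hBdense : Dense (B : Set (Completion X)) := by
      have h1 : (B : Set (Completion X)) =
          T.toHomeomorph.symm '' ((LinearMap.range ιY : Submodule ℝ (Completion Y)) :
            Set (Completion Y)) := by
        ext z
        constructor
        · intro hz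
          exact ⟨T z, hz, T.symm_apply_apply z⟩
        · rintro ⟨w, hw, rfl⟩
          show Tlin (T.symm w) ∈ LinearMap.range ιY
          have : Tlin (T.symm w) = w := T.apply_symm_apply w
          rw [this]; exact hw
      rw [h1]
      apply dense_image_homeomorph
      rw [LinearMap.coe_range]
      exact Completion.denseRange_coe
    obtain ⟨U, A₀, hA₀A, hA₀d, hUB⟩ := key_perturb A B hAdense hBdense
    set S : Completion X ≃L[ℝ] Completion Y := U.trans T with hS
    set Slin : Completion X →ₗ[ℝ] Completion Y :=
      ((S : Completion X →L[ℝ] Completion Y) : Completion X →ₗ[ℝ] Completion Y) with hSlin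
    set M : Submodule ℝ (Completion Y) := A₀.map Slin with hM
    have hMle : M ≤ LinearMap.range ιY := by
      rintro _ ⟨a, ha, rfl⟩
      exact hUB a ha
    have hMd : Dense (M : Set (Completion Y)) := by
      have h1 : (M : Set (Completion Y)) = S.toHomeomorph '' (A₀ : Set (Completion X)) :=
        Submodule.map_coe _ _
      rw [h1]
      exact dense_image_homeomorph S.toHomeomorph hA₀d
    refine ⟨A₀.comap ιX, M.comap ιY, ?_, ?_, ?_⟩
    · exact pullbackEquiv_dense ιX hιXiso A₀ hA₀A hA₀d
    · exact pullbackEquiv_dense ιY hιYiso M hMle hMd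
    · exact ⟨(pullbackEquiv ιX hιXiso A₀ hA₀A).trans
        ((mapEquiv S A₀).trans (pullbackEquiv ιY hιYiso M hMle).symm)⟩
end

section
/- Let Γ be a set and let (e_γ)_{γ∈Γ} be the canonical unit vector basis of the real Banach space ℓ₁(Γ). Then every dense linear subspace Y of ℓ₁(Γ) contains a further linear subspace Y₀ that is dense in ℓ₁(Γ) and linearly isomorphic (via a continuous linear bijection with continuous inverse) to the linear span of {e_γ : γ∈Γ}, i.e., to the subspace of finitely supported vectors of ℓ₁(Γ) with the induced norm. In particular, any two dense linear subspaces of ℓ₁(Γ) are densely isomorphic. -/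
open Cardinal Ordinal TopologicalSpace

universe u v

open Finsupp Metric ENNReal

namespace St7

set_option linter.unusedSectionVars false

variable {Γ : Type u} [DecidableEq Γ]

local notation "E" => lp (fun _ : Γ => ℝ) 1

noncomputable def ee (γ : Γ) : lp (fun _ : Γ => ℝ) 1 := lp.single 1 γ (1 : ℝ)

lemma smul_ee (γ : Γ) (a : ℝ) : a • ee γ = lp.single 1 γ a := by
  rw [ee, ← lp.single_smul, _root_.smul_eq_mul, mul_one]

lemma lc_eq_sum (v : Γ → E) (c : Γ →₀ ℝ) :
    Finsupp.linearCombination ℝ v c = ∑ i ∈ c.support, c i • v i := by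
  rw [Finsupp.linearCombination_apply, Finsupp.sum]

lemma norm_lc_ee (c : Γ →₀ ℝ) :
    ‖Finsupp.linearCombination ℝ (ee : Γ → E) c‖ = ∑ i ∈ c.support, |c i| := by
  have h1 : Finsupp.linearCombination ℝ (ee : Γ → E) c
      = ∑ i ∈ c.support, lp.single 1 i ((c : Γ → ℝ) i) := by
    rw [lc_eq_sum]
    exact Finset.sum_congr rfl fun i _ => smul_ee i (c i)
  have h2 := lp.norm_sum_single (p := 1) (by norm_num) (fun i => (c : Γ → ℝ) i) c.support
  rw [h1]
  simpa [Real.rpow_natCast] using h2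

lemma norm_lc_le (v : Γ → E) (c : Γ →₀ ℝ) (C : ℝ) (hv : ∀ γ, ‖v γ‖ ≤ C) :
    ‖Finsupp.linearCombination ℝ v c‖ ≤ C * ∑ i ∈ c.support, |c i| := by
  rw [lc_eq_sum]
  calc ‖∑ i ∈ c.support, c i • v i‖ ≤ ∑ i ∈ c.support, ‖c i • v i‖ :=
        norm_sum_le _ _
    _ ≤ ∑ i ∈ c.support, C * |c i| := by
        refine Finset.sum_le_sum fun i _ => ?_
        rw [norm_smul, Real.norm_eq_abs, mul_comm C]
        exact mul_le_mul_of_nonneg_left (hv i) (abs_nonneg _)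
    _ = C * ∑ i ∈ c.support, |c i| := (Finset.mul_sum _ _ _).symm

lemma lc_ee_apply (c : Γ →₀ ℝ) (j : Γ) :
    (Finsupp.linearCombination ℝ (ee : Γ → E) c : Γ → ℝ) j = c j := by
  have h1 : Finsupp.linearCombination ℝ (ee : Γ → E) c
      = ∑ i ∈ c.support, lp.single 1 i ((c : Γ → ℝ) i) := by
    rw [lc_eq_sum]
    exact Finset.sum_congr rfl fun i _ => smul_ee i (c i)
  rw [h1, lp.coeFn_sum, Finset.sum_apply]
  by_cases hj : j ∈ c.support
  · rw [Finset.sum_eq_single j]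
    · exact lp.single_apply_self 1 j _
    · intro b _ hb; exact lp.single_apply_ne 1 b _ (Ne.symm hb)
    · intro h; exact absurd hj h
  · rw [Finset.sum_eq_zero, (Finsupp.notMem_support_iff.mp hj)]
    intro b hb
    exact lp.single_apply_ne 1 b _ (fun h => (h ▸ hj) hb)

lemma lc_ee_injective : Function.Injective (Finsupp.linearCombination ℝ (ee : Γ → E)) := by
  rw [← LinearMap.ker_eq_bot, LinearMap.ker_eq_bot']
  intro c hc
  ext j
  have := lc_ee_apply c j
  rw [hc] at this
  simpa using this.symm

/-- density of the span of unit vectors -/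
lemma dense_span_ee : Dense ((Submodule.span ℝ (Set.range (ee : Γ → E)) : Submodule ℝ E) : Set E) := by
  intro f
  have hs := lp.hasSum_single (show (1:ℝ≥0∞) ≠ ⊤ by norm_num) f
  refine mem_closure_of_tendsto hs (Filter.Eventually.of_forall fun s => ?_)
  refine Submodule.sum_mem _ fun i _ => ?_
  rw [← smul_ee]
  exact Submodule.smul_mem _ _ (Submodule.subset_span ⟨i, rfl⟩)


open Metric in
lemma le_infDist' {X : Type*} [MetricSpace X] {s : Set X} (hs : s.Nonempty) {x : X} {b : ℝ}
    (h : ∀ y ∈ s, b ≤ dist x y) : b ≤ infDist x s := by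
  by_contra hb
  push_neg at hb
  obtain ⟨y, hy, hlt⟩ := (infDist_lt_iff hs).mp hb
  exact absurd (h y hy) (not_le.mpr hlt)

lemma lc_sub (v w : Γ → E) (c : Γ →₀ ℝ) :
    Finsupp.linearCombination ℝ v c - Finsupp.linearCombination ℝ w c
      = Finsupp.linearCombination ℝ (fun γ => v γ - w γ) c := by
  rw [lc_eq_sum, lc_eq_sum, lc_eq_sum, ← Finset.sum_sub_distrib]
  exact Finset.sum_congr rfl fun i _ => (smul_sub _ _ _).symm

lemma main (Y : Submodule ℝ E) (hY : Dense (Y : Set E)) :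
    ∃ Y₀ : Submodule ℝ E, Y₀ ≤ Y ∧ Dense (Y₀ : Set E) ∧
      Nonempty (Y₀ ≃L[ℝ] Submodule.span ℝ (Set.range (ee : Γ → E))) := by
  classical
  have h : ∀ γ : Γ, ∃ b ∈ (Y : Set E), dist (ee γ) b < 1/2 := fun γ =>
    Metric.mem_closure_iff.mp (hY (ee γ)) _ (by norm_num)
  choose y hyY hyd using h
  set L := Finsupp.linearCombination ℝ (ee : Γ → E) with hL
  set M := Finsupp.linearCombination ℝ y with hM
  have hvb : ∀ γ, ‖y γ - ee γ‖ ≤ 1/2 := fun γ => by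
    have := hyd γ
    rw [dist_eq_norm, norm_sub_rev] at this
    linarith
  have hML : ∀ c, ‖M c - L c‖ ≤ 1/2 * ‖L c‖ := fun c => by
    rw [lc_sub y ee c, norm_lc_ee]
    exact norm_lc_le _ c (1/2) hvb
  have hMub : ∀ c, ‖M c‖ ≤ 2 * ‖L c‖ := fun c => by
    have h1 := hML c
    have h2 : ‖M c‖ ≤ ‖L c‖ + ‖M c - L c‖ :=
      calc ‖M c‖ = ‖L c + (M c - L c)‖ := by rw [show L c + (M c - L c) = M c by abel]
        _ ≤ ‖L c‖ + ‖M c - L c‖ := norm_add_le _ _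
    linarith [norm_nonneg (L c)]
  have hMlb : ∀ c, ‖L c‖ ≤ 2 * ‖M c‖ := fun c => by
    have h1 := hML c
    have h2 : ‖L c‖ ≤ ‖M c‖ + ‖M c - L c‖ :=
      calc ‖L c‖ = ‖M c + (L c - M c)‖ := by rw [show M c + (L c - M c) = L c by abel]
        _ ≤ ‖M c‖ + ‖L c - M c‖ := norm_add_le _ _
        _ = ‖M c‖ + ‖M c - L c‖ := by rw [norm_sub_rev]
    linarith [norm_nonneg (M c)]
  have hMinj : Function.Injective M := by
    rw [← LinearMap.ker_eq_bot, LinearMap.ker_eq_bot']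
    intro c hc
    have h1 := hMlb c
    rw [hc, norm_zero] at h1
    have h2 : L c = 0 := by
      rw [← norm_le_zero_iff]; linarith
    exact lc_ee_injective (by rw [h2, map_zero])
  set Y₀ : Submodule ℝ E := LinearMap.range M with hY₀
  have hY₀Y : Y₀ ≤ Y := by
    rintro x ⟨c, rfl⟩
    rw [lc_eq_sum]
    exact Submodule.sum_mem Y fun i _ => Y.smul_mem _ (hyY i)
  -- the continuous linear equivalence
  let eM : (Γ →₀ ℝ) ≃ₗ[ℝ] Y₀ := LinearEquiv.ofInjective M hMinj
  let eL : (Γ →₀ ℝ) ≃ₗ[ℝ] (Submodule.span ℝ (Set.range (ee : Γ → E))) :=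
    (LinearEquiv.ofInjective L lc_ee_injective).trans
      (LinearEquiv.ofEq _ _ (Finsupp.range_linearCombination ℝ (v := ee)))
  have heM : ∀ c, ((eM c : Y₀) : E) = M c := fun c => rfl
  have heL : ∀ c, ((eL c : Submodule.span ℝ (Set.range (ee : Γ → E))) : E) = L c := fun c => rfl
  let Φ : Y₀ ≃ₗ[ℝ] (Submodule.span ℝ (Set.range (ee : Γ → E))) := eM.symm.trans eL
  have hΦ1 : ∀ u : Y₀, ‖Φ u‖ ≤ 2 * ‖u‖ := by
    intro u
    rw [Submodule.coe_norm, Submodule.coe_norm]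
    have h1 : (Φ u : E) = L (eM.symm u) := heL _
    have h2 : (u : E) = M (eM.symm u) := by
      conv_lhs => rw [← eM.apply_symm_apply u]
      exact heM _
    rw [h1, h2]
    exact hMlb _
  have hΦ2 : ∀ u, ‖Φ.symm u‖ ≤ 2 * ‖u‖ := by
    intro u
    rw [Submodule.coe_norm, Submodule.coe_norm]
    have h1 : ((Φ.symm u : Y₀) : E) = M (eL.symm u) := heM _
    have h2 : (u : E) = L (eL.symm u) := by
      conv_lhs => rw [← eL.apply_symm_apply u]
      exact heL _
    rw [h1, h2]
    exact hMub _
  -- density of Y₀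
  have happrox : ∀ x : E, ∀ ε > (0:ℝ), ∃ z ∈ (Y₀ : Set E), ‖x - z‖ ≤ 1/2 * ‖x‖ + ε := by
    intro x ε hε
    have hx := dense_span_ee (Γ := Γ) x
    obtain ⟨p, hp, hpd⟩ := Metric.mem_closure_iff.mp hx (ε/2) (by linarith)
    have hp' : p ∈ LinearMap.range L := by
      rw [hL, Finsupp.range_linearCombination]
      exact hp
    obtain ⟨c, rfl⟩ := hp'
    refine ⟨M c, ⟨c, rfl⟩, ?_⟩
    have h1 : ‖x - M c‖ ≤ ‖x - L c‖ + ‖L c - M c‖ := by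
      rw [show x - M c = (x - L c) + (L c - M c) by abel]
      exact norm_add_le _ _
    have h2 : ‖L c - M c‖ ≤ 1/2 * ‖L c‖ := by rw [norm_sub_rev]; exact hML c
    have h3 : ‖L c‖ ≤ ‖x‖ + ‖x - L c‖ := by
      rw [show (‖L c‖ : ℝ) = ‖x + (L c - x)‖ by rw [show x + (L c - x) = L c by abel]]
      calc ‖x + (L c - x)‖ ≤ ‖x‖ + ‖L c - x‖ := norm_add_le _ _
        _ = ‖x‖ + ‖x - L c‖ := by rw [norm_sub_rev]
    have h4 : ‖x - L c‖ ≤ ε / 2 := by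
      rw [← dist_eq_norm]; exact le_of_lt hpd
    linarith
  have hinf : ∀ x : E, Metric.infDist x (Y₀ : Set E) ≤ 1/2 * ‖x‖ := by
    intro x
    refine le_of_forall_pos_le_add fun ε hε => ?_
    obtain ⟨z, hz, hzd⟩ := happrox x ε hε
    calc Metric.infDist x (Y₀ : Set E) ≤ dist x z := Metric.infDist_le_dist_of_mem hz
      _ ≤ 1/2 * ‖x‖ + ε := by rw [dist_eq_norm]; exact hzd
  have hne : (Y₀ : Set E).Nonempty := ⟨0, Y₀.zero_mem⟩
  have hdense : Dense (Y₀ : Set E) := by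
    intro x
    rw [Metric.mem_closure_iff_infDist_zero hne]
    set d := Metric.infDist x (Y₀ : Set E) with hd
    have hd1 : ∀ z ∈ (Y₀ : Set E), d ≤ 1/2 * ‖x - z‖ := by
      intro z hz
      have h2 : d ≤ Metric.infDist (x - z) (Y₀ : Set E) := by
        refine le_infDist' hne fun w hw => ?_
        calc d ≤ dist x (z + w) := Metric.infDist_le_dist_of_mem (Y₀.add_mem hz hw)
          _ = dist (x - z) w := by rw [dist_eq_norm, dist_eq_norm, _root_.sub_sub]
      exact h2.trans (hinf (x - z))
    have hd2 : 2 * d ≤ d := by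
      refine le_infDist' hne fun z hz => ?_
      have := hd1 z hz
      rw [dist_eq_norm]
      linarith
    have := Metric.infDist_nonneg (x := x) (s := (Y₀ : Set E))
    rw [← hd] at this
    linarith
  exact ⟨Y₀, hY₀Y, hdense, ⟨Φ.toContinuousLinearEquivOfBounds 2 2 hΦ1 hΦ2⟩⟩


noncomputable def subEquiv {W Y : Submodule ℝ E} (h : W ≤ Y) :
    (W.comap Y.subtype) ≃L[ℝ] W :=
  (Submodule.comapSubtypeEquivOfLe h).toContinuousLinearEquivOfBounds 1 1
    (fun x => by
      rw [one_mul, Submodule.coe_norm, Submodule.comapSubtypeEquivOfLe_apply_coe]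
      rfl)
    (fun x => by
      rw [one_mul, Submodule.coe_norm]
      exact le_of_eq rfl)

lemma dense_comap {W Y : Submodule ℝ E} (h : W ≤ Y)
    (hW : Dense (W : Set E)) :
    Dense ((W.comap Y.subtype : Submodule ℝ Y) : Set Y) := by
  rw [Metric.dense_iff]
  intro x r hr
  obtain ⟨z, hz, hd⟩ := Metric.mem_closure_iff.mp (hW (x : E)) r hr
  refine ⟨⟨z, h hz⟩, ?_, ?_⟩
  · rw [Metric.mem_ball, Subtype.dist_eq, dist_comm]
    exact hd
  · exact hz

end St7

/-- Every dense linear subspace of `ℓ₁(Γ)` contains a dense linear subspace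
isomorphic to the linear span of the canonical unit vector basis; in particular any two dense
linear subspaces of `ℓ₁(Γ)` are densely isomorphic. -/
theorem statement7 {Γ : Type u} [DecidableEq Γ] :
    (∀ Y : Submodule ℝ (lp (fun _ : Γ => ℝ) 1),
      Dense (Y : Set (lp (fun _ : Γ => ℝ) 1)) →
      ∃ Y₀ : Submodule ℝ (lp (fun _ : Γ => ℝ) 1), Y₀ ≤ Y ∧
        Dense (Y₀ : Set (lp (fun _ : Γ => ℝ) 1)) ∧
        Nonempty (Y₀ ≃L[ℝ]
          Submodule.span ℝ (Set.range fun γ : Γ => lp.single 1 γ (1 : ℝ)))) ∧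
    (∀ Y Z : Submodule ℝ (lp (fun _ : Γ => ℝ) 1),
      Dense (Y : Set (lp (fun _ : Γ => ℝ) 1)) → Dense (Z : Set (lp (fun _ : Γ => ℝ) 1)) →
      DenselyIsomorphic Y Z) :=  by
  constructor
  · intro Y hY
    obtain ⟨Y₀, h1, h2, ⟨φ⟩⟩ := St7.main Y hY
    exact ⟨Y₀, h1, h2, ⟨φ⟩⟩
  · intro Y Z hY hZ
    obtain ⟨Y₀, hY₀Y, hY₀d, ⟨φ⟩⟩ := St7.main Y hY
    obtain ⟨Z₀, hZ₀Z, hZ₀d, ⟨ψ⟩⟩ := St7.main Z hZ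
    exact ⟨Y₀.comap Y.subtype, Z₀.comap Z.subtype,
      St7.dense_comap hY₀Y hY₀d, St7.dense_comap hZ₀Z hZ₀d,
      ⟨(St7.subEquiv hY₀Y).trans (φ.trans (ψ.symm.trans (St7.subEquiv hZ₀Z).symm))⟩⟩
end

section
/- Let X be a real Banach space and let {(e_α, e*_α)}_{α∈Γ} be an M-basis for X that countably supports X*, where the index set Γ is uncountable. Then the zero vector belongs to the closed convex hull of the set {e_α : α∈Γ}. -/
open Cardinal Ordinal TopologicalSpace

universe u v

/-- If an M-basis with uncountable index set countably supports the dual,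
then `0` lies in the closed convex hull of the basis vectors. -/
theorem statement8 {X : Type u} [NormedAddCommGroup X] [NormedSpace ℝ X] [CompleteSpace X]
    {Γ : Type v} [Uncountable Γ] (e : Γ → X) (f : Γ → X →L[ℝ] ℝ)
    (hM : IsMBasis e f) (hcs : CountablySupports e) :
    (0 : X) ∈ closure (convexHull ℝ (Set.range e)) := by
  by_contra h0
  obtain ⟨φ, u, hu0, hu⟩ := geometric_hahn_banach_point_closed
    ((convex_convexHull ℝ (Set.range e)).closure) isClosed_closure h0
  simp only [map_zero] at hu0
  have hall : ∀ γ, φ (e γ) ≠ 0 := by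
    intro γ
    have := hu (e γ) (subset_closure (subset_convexHull ℝ _ ⟨γ, rfl⟩))
    linarith
  have : {γ | φ (e γ) ≠ 0} = Set.univ := Set.eq_univ_of_forall hall
  have hc := hcs φ
  rw [this] at hc
  exact (Set.not_countable_univ) hc
end

section
/- Let X be a real Banach space and let {(e_j, e*_j)}_{j∈ℕ₀} be an M-basis for X with ‖e_j‖ = 1 for every j. For q ∈ (0, 1/2) set g_q := Σ_{j=0}^∞ qʲ e_j (the series converges absolutely). Then for every infinite subset J of (0, 1/2), the closed linear span of {g_q : q ∈ J} equals X. -/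
open Cardinal Ordinal TopologicalSpace

universe u v

lemma aux_dense_of_dual {X : Type*} [NormedAddCommGroup X] [NormedSpace ℝ X]
    (s : Submodule ℝ X) (h : ∀ φ : X →L[ℝ] ℝ, (∀ x ∈ s, φ x = 0) → φ = 0) :
    s.topologicalClosure = ⊤ := by
  by_contra hne
  obtain ⟨x, hx⟩ : ∃ x, x ∉ s.topologicalClosure := by
    by_contra hc
    push_neg at hc
    exact hne (Submodule.eq_top_iff'.mpr hc)
  obtain ⟨φ, u, hlt, hux⟩ := geometric_hahn_banach_closed_point
    (s.topologicalClosure.convex) (Submodule.isClosed_topologicalClosure s) hx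
  have hzero : ∀ y ∈ s, φ y = 0 := by
    intro y hy
    by_contra hy0
    have hmem : ((|u| + 1) / φ y) • y ∈ s.topologicalClosure :=
      Submodule.le_topologicalClosure s (Submodule.smul_mem s _ hy)
    have := hlt _ hmem
    rw [map_smul, _root_.smul_eq_mul, div_mul_cancel₀ _ hy0] at this
    linarith [abs_nonneg u, le_abs_self u]
  have hφ0 : φ = 0 := h φ hzero
  have h0 : φ (0 : X) < u := hlt 0 (Submodule.zero_mem _)
  rw [hφ0] at hux
  simp at hux h0
  linarith

/-- (Klee) For a normalised M-basis `{(e j, f j)}_{j ∈ ℕ₀}` and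
`g q = ∑ q ^ j • e j`, the closed linear span of `{g q : q ∈ J}` is the whole space,
for every infinite `J ⊆ (0, 1/2)`. -/
theorem statement9 {X : Type u} [NormedAddCommGroup X] [NormedSpace ℝ X] [CompleteSpace X]
    (e : ℕ → X) (f : ℕ → X →L[ℝ] ℝ) (hM : IsMBasis e f) (hnorm : ∀ j, ‖e j‖ = 1)
    (J : Set ℝ) (hJ : J ⊆ Set.Ioo (0 : ℝ) (1 / 2)) (hinf : J.Infinite) :
    (Submodule.span ℝ
        ((fun q : ℝ => ∑' j : ℕ, q ^ j • e j) '' J)).topologicalClosure = ⊤ := by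
  apply aux_dense_of_dual
  intro φ hφ
  have hφJ : ∀ q ∈ J, φ (∑' j : ℕ, q ^ j • e j) = 0 := fun q hq =>
    hφ _ (Submodule.subset_span ⟨q, hq, rfl⟩)
  have key : ∀ n, φ (e n) = 0 := by
    set p : FormalMultilinearSeries ℝ ℝ ℝ :=
      fun n => ContinuousMultilinearMap.mkPiRing ℝ (Fin n) (φ (e n)) with hp
    have hpn : ∀ n, ‖p n‖ = |φ (e n)| := fun n => by
      simp [hp, ContinuousMultilinearMap.norm_mkPiRing, Real.norm_eq_abs]
    have hrad : (1 : ENNReal) ≤ p.radius := by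
      have := p.le_radius_of_bound ‖φ‖ (r := 1) (fun n => by
        rw [hpn]
        calc |φ (e n)| * (1:ℝ)^n = |φ (e n)| := by ring
          _ ≤ ‖φ‖ * ‖e n‖ := φ.le_opNorm (e n)
          _ = ‖φ‖ := by rw [hnorm n, mul_one])
      simpa using this
    have hball : HasFPowerSeriesOnBall p.sum p 0 1 :=
      (p.hasFPowerSeriesOnBall (zero_lt_one.trans_le hrad)).mono zero_lt_one hrad
    have hAn : AnalyticOnNhd ℝ p.sum (Metric.eball (0:ℝ) 1) := hball.analyticOnNhd
    -- the ball as a metric ball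
    have hballset : Metric.eball (0:ℝ) 1 = Metric.ball (0:ℝ) 1 := by
      rw [show (1:ENNReal) = ENNReal.ofReal 1 by simp, Metric.emetric_ball]
    -- accumulation point
    obtain ⟨z₀, hz₀K, hz₀⟩ := hinf.exists_accPt_of_subset_isCompact
      (isCompact_Icc (a := (0:ℝ)) (b := 1/2))
      (fun q hq => Set.mem_Icc_of_Ioo (hJ hq))
    have hz₀ball : z₀ ∈ Metric.eball (0:ℝ) 1 := by
      rw [hballset, Metric.mem_ball, Real.dist_eq, _root_.sub_zero]
      rw [abs_of_nonneg hz₀K.1]; linarith [hz₀K.2]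
    -- p.sum vanishes on J
    have hsumJ : ∀ q ∈ J, p.sum q = 0 := by
      intro q hq
      obtain ⟨hq0, hq1⟩ := hJ hq
      have hqabs : |q| < 1 := by rw [abs_of_pos hq0]; linarith
      have hsummable : Summable (fun j : ℕ => q ^ j • e j) := by
        apply Summable.of_norm
        simp only [norm_smul, hnorm, mul_one, norm_pow, Real.norm_eq_abs]
        exact summable_geometric_of_lt_one (abs_nonneg q) hqabs
      have : φ (∑' j : ℕ, q ^ j • e j) = ∑' j : ℕ, φ (q ^ j • e j) :=
        φ.map_tsum hsummable
      rw [hφJ q hq] at this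
      have heq : p.sum q = ∑' j : ℕ, φ (q ^ j • e j) := by
        unfold FormalMultilinearSeries.sum
        congr 1
        funext n
        simp [hp, ContinuousMultilinearMap.mkPiRing_apply, map_smul, _root_.smul_eq_mul, mul_comm]
      rw [heq, ← this]
    have hfreq : ∃ᶠ z in nhdsWithin z₀ {z₀}ᶜ, p.sum z = 0 := by
      have : ∃ᶠ z in nhdsWithin z₀ {z₀}ᶜ, z ∈ J := Filter.frequently_mem_iff_neBot.mpr hz₀
      exact this.mono fun z hz => hsumJ z hz
    have hEq : Set.EqOn p.sum 0 (Metric.eball (0:ℝ) 1) :=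
      hAn.eqOn_zero_of_preconnected_of_frequently_eq_zero
        (by rw [hballset]; exact (convex_ball (0:ℝ) 1).isPreconnected) hz₀ball hfreq
    have hev : p.sum =ᶠ[nhds (0:ℝ)] 0 := by
      have hopen : IsOpen (Metric.eball (0:ℝ) 1) := Metric.isOpen_eball
      have h0mem : (0:ℝ) ∈ Metric.eball (0:ℝ) 1 := Metric.mem_eball_self zero_lt_one
      exact Filter.eventuallyEq_of_mem (hopen.mem_nhds h0mem) hEq
    have hp0 : p = 0 := (hball.hasFPowerSeriesAt.congr hev).eq_zero
    intro n
    have : p n = 0 := by rw [hp0]; rfl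
    have := congrFun (congrArg DFunLike.coe this) (fun _ : Fin n => (1:ℝ))
    simpa [hp, ContinuousMultilinearMap.mkPiRing_apply] using this
  exact ContinuousLinearMap.ext_on hM.2.1 (by rintro x ⟨n, rfl⟩; simpa using key n)
end

section
/- Let X be a real Banach space, κ an ordinal with κ > ω, and {(e_α, e*_α)}_{α<κ} an M-basis for X with ‖e_α‖ = 1 for every α < κ. Let (q_α)_{ω≤α<κ} be a family of pairwise distinct scalars in (0, 1/2), and for ω ≤ α < κ define ẽ_α := e_α + Σ_{j=0}^∞ (q_α)ʲ e_j, where the sum ranges over the natural numbers j. Then the sequence of functionals (e*_j)_{j∈ℕ₀} separates the points of Y := span{ẽ_α : ω ≤ α < κ}: if y ∈ Y satisfies e*_j(y) = 0 for every j ∈ ℕ₀, then y = 0. -/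
open Cardinal Ordinal TopologicalSpace

universe u v

/-- (Fact 3.5 of the paper.) The functionals `(f j)_{j ∈ ℕ₀}` separate the
points of the span of the vectors `ẽ_α = e_α + ∑ (q_α)ʲ • e_j`, `ω ≤ α < κ`. -/
theorem statement12 {X : Type u} [NormedAddCommGroup X] [NormedSpace ℝ X] [CompleteSpace X]
    (κ : Ordinal.{v}) (hκ : Ordinal.omega0 < κ)
    (hnat : ∀ n : ℕ, (n : Ordinal.{v}) < κ)
    (e : {α : Ordinal.{v} // α < κ} → X)
    (f : {α : Ordinal.{v} // α < κ} → X →L[ℝ] ℝ)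
    (hM : IsMBasis e f) (hnorm : ∀ α, ‖e α‖ = 1)
    (q : {α : Ordinal.{v} // α < κ} → ℝ)
    (hq : ∀ α, Ordinal.omega0 ≤ α.1 → q α ∈ Set.Ioo (0 : ℝ) (1 / 2))
    (hinj : ∀ α β, Ordinal.omega0 ≤ α.1 → Ordinal.omega0 ≤ β.1 → q α = q β → α = β) :
    ∀ y ∈ Submodule.span ℝ
        ((fun α => e α + ∑' j : ℕ, (q α) ^ j • e ⟨(j : Ordinal.{v}), hnat j⟩) ''
          {α | Ordinal.omega0 ≤ α.1}),
      (∀ j : ℕ, f ⟨(j : Ordinal.{v}), hnat j⟩ y = 0) → y = 0 := by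
  classical
  intro y hy hfy
  set S : Set {α : Ordinal.{v} // α < κ} := {α | Ordinal.omega0 ≤ α.1} with hS
  set g : {α : Ordinal.{v} // α < κ} → X :=
    fun α => e α + ∑' j : ℕ, (q α) ^ j • e ⟨(j : Ordinal.{v}), hnat j⟩ with hgdef
  rw [Submodule.mem_span_set] at hy
  obtain ⟨c, hsupp, hsum⟩ := hy
  have hchoice : ∀ v : c.support, ∃ α, Ordinal.omega0 ≤ α.1 ∧ g α = (v : X) := by
    intro v; exact hsupp v.2
  choose w hw1 hw2 using hchoice
  have hsummable : ∀ α, Ordinal.omega0 ≤ α.1 →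
      Summable (fun n : ℕ => (q α) ^ n • e ⟨(n : Ordinal.{v}), hnat n⟩) := by
    intro α hα
    obtain ⟨h0, h2⟩ := hq α hα
    apply Summable.of_norm
    have hnrm : (fun n : ℕ => ‖(q α) ^ n • e ⟨(n : Ordinal.{v}), hnat n⟩‖)
        = fun n => (q α) ^ n := by
      funext n
      rw [norm_smul, hnorm, mul_one, norm_pow, Real.norm_eq_abs, abs_of_pos h0]
    rw [hnrm]
    exact summable_geometric_of_lt_one h0.le (by linarith)
  have key : ∀ (j : ℕ) (α), Ordinal.omega0 ≤ α.1 →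
      f ⟨(j : Ordinal.{v}), hnat j⟩ (g α) = q α ^ j := by
    intro j α hα
    have hne : (⟨(j : Ordinal.{v}), hnat j⟩ : {α : Ordinal.{v} // α < κ}) ≠ α := by
      intro h
      have h1 : α.1 = (j : Ordinal.{v}) := (congrArg Subtype.val h).symm
      have h2 : α.1 < Ordinal.omega0 := h1 ▸ Ordinal.nat_lt_omega0 j
      exact absurd hα (not_le.mpr h2)
    rw [hgdef]
    simp only [map_add]
    rw [hM.1.2 _ _ hne, zero_add,
      (f ⟨(j : Ordinal.{v}), hnat j⟩).map_tsum (hsummable α hα),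
      tsum_eq_single j]
    · rw [map_smul, hM.1.1, _root_.smul_eq_mul, mul_one]
    · intro n hn
      rw [map_smul, hM.1.2, smul_zero]
      intro h
      apply hn
      have h' : ((j : Ordinal.{v}) : Ordinal.{v}) = (n : Ordinal.{v}) := Subtype.ext_iff.mp h
      have : j = n := by exact_mod_cast h'
      exact this.symm
  have hval : ∀ j : ℕ, ∑ v : c.support, c v.1 * q (w v) ^ j = 0 := by
    intro j
    calc ∑ v : c.support, c v.1 * q (w v) ^ j
        = ∑ v : c.support, f ⟨(j : Ordinal.{v}), hnat j⟩ (c v.1 • (v.1 : X)) := by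
          refine Finset.sum_congr rfl fun v _ => ?_
          rw [map_smul, ← hw2 v, key j (w v) (hw1 v), _root_.smul_eq_mul]
      _ = f ⟨(j : Ordinal.{v}), hnat j⟩ (∑ v ∈ c.support, c v • v) := by
          rw [map_sum, ← Finset.sum_attach c.support
            (fun v => f ⟨(j : Ordinal.{v}), hnat j⟩ (c v • v)), Finset.univ_eq_attach]
      _ = f ⟨(j : Ordinal.{v}), hnat j⟩ y := by rw [← hsum]; rfl
      _ = 0 := hfy j
  have hwinj : Function.Injective w := by
    intro v v' h
    apply Subtype.ext
    rw [← hw2 v, ← hw2 v', h]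
  have hqwinj : Function.Injective (fun v => q (w v)) := fun v v' h =>
    hwinj (hinj _ _ (hw1 v) (hw1 v') h)
  have hli : LinearIndependent ℝ
      (fun v : c.support => ((powersHom ℝ (q (w v))) : Multiplicative ℕ → ℝ)) := by
    apply (linearIndependent_monoidHom (Multiplicative ℕ) ℝ).comp
    intro v v' h
    apply hqwinj
    have h1 := congrArg (fun φ : Multiplicative ℕ →* ℝ => φ (Multiplicative.ofAdd 1)) h
    simpa using h1
  have hc0 : ∀ v : c.support, c v.1 = 0 := by
    apply Fintype.linearIndependent_iff.mp hli (fun v => c v.1)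
    funext m
    have := hval m.toAdd
    simpa [Finset.sum_apply] using this
  have hczero : c = 0 := by
    ext v
    by_cases hv : v ∈ c.support
    · exact hc0 ⟨v, hv⟩
    · exact Finsupp.notMem_support_iff.mp hv
  rw [← hsum, hczero, Finsupp.sum_zero_index]
end

section
/- Let X be a real Banach space and let {(v_α, φ_α)}_{α∈Γ} be an M-basis for X that countably supports X*. Set Z := span{v_α : α∈Γ} (the algebraic linear span) and let Z₀ be a non-separable linear subspace of Z. Then no sequence of functionals separates the points of Z₀: for every sequence (ψ_j)_{j∈ℕ} in X* there exists a nonzero vector w ∈ Z₀ such that ψ_j(w) = 0 for all j ∈ ℕ. -/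
open Cardinal Ordinal TopologicalSpace

universe u v

/-- (Lemma 3.6 of the paper.) If `{(v α, φ α)}` is an M-basis countably
supporting the dual and `Z₀` is a non-separable subspace of `span {v α}`, then no sequence
of functionals separates the points of `Z₀`. -/
theorem statement13 {X : Type u} [NormedAddCommGroup X] [NormedSpace ℝ X] [CompleteSpace X]
    {Γ : Type v} (v : Γ → X) (φ : Γ → X →L[ℝ] ℝ)
    (hM : IsMBasis v φ) (hcs : CountablySupports v)
    (Z₀ : Submodule ℝ X) (hZ₀ : Z₀ ≤ Submodule.span ℝ (Set.range v))
    (hns : ¬ SeparableSpace Z₀) :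
    ∀ ψ : ℕ → X →L[ℝ] ℝ, ∃ w ∈ Z₀, w ≠ 0 ∧ ∀ j : ℕ, ψ j w = 0 := by
  intro ψ
  by_contra hcon
  push_neg at hcon
  obtain ⟨⟨hb1, hb2⟩, hdense, hsep⟩ := hM
  set S : Set Γ := ⋃ j, {γ | ψ j (v γ) ≠ 0} with hS
  have hScount : S.Countable := Set.countable_iUnion fun j => hcs (ψ j)
  -- every element of the span has finitely supported coefficients given by the `φ γ`
  have hcoef : ∀ x ∈ Submodule.span ℝ (Set.range v), ∃ c : Γ →₀ ℝ,
      (∀ γ, φ γ x = c γ) ∧ x = c.sum fun β a => a • v β := by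
    intro x hx
    obtain ⟨c, hc⟩ := Finsupp.mem_span_range_iff_exists_finsupp.mp hx
    refine ⟨c, fun γ => ?_, hc.symm⟩
    rw [← hc, Finsupp.sum, map_sum, Finset.sum_eq_single γ]
    · simp [hb1 γ]
    · intro β _ hβ
      simp [hb2 γ β (Ne.symm hβ)]
    · intro hγ
      simp [Finsupp.notMem_support_iff.mp hγ]
  -- if all coefficients in `S` vanish, then all `ψ j` vanish
  have key : ∀ x ∈ Submodule.span ℝ (Set.range v), (∀ γ ∈ S, φ γ x = 0) →
      ∀ j, ψ j x = 0 := by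
    intro x hx h0 j
    obtain ⟨c, hc1, hc2⟩ := hcoef x hx
    rw [hc2, Finsupp.sum, map_sum]
    apply Finset.sum_eq_zero
    intro β _
    rw [map_smul]
    by_cases hβS : β ∈ S
    · have hcb : c β = 0 := by rw [← hc1 β]; exact h0 β hβS
      simp [hcb]
    · have : ψ j (v β) = 0 := by
        by_contra hne
        exact hβS (Set.mem_iUnion.2 ⟨j, hne⟩)
      simp [this]
  -- On `Z₀` the coefficient function restricted to `S` has finite support
  have hfin : ∀ x : Z₀, {γ : S | φ γ (x : X) ≠ 0}.Finite := by
    intro x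
    obtain ⟨c, hc1, _⟩ := hcoef (x : X) (hZ₀ x.2)
    apply Set.Finite.preimage (Set.injOn_of_injective Subtype.val_injective)
      (s := {γ : Γ | φ γ (x : X) ≠ 0})
    apply c.finite_support.subset
    intro γ hγ
    simp only [Set.mem_setOf_eq, hc1 γ] at hγ
    exact Function.mem_support.2 hγ
  -- the coefficient map into finitely supported functions on `S`
  let T : Z₀ →ₗ[ℝ] (S →₀ ℝ) :=
    { toFun := fun x => Finsupp.onFinset (hfin x).toFinset (fun γ => φ γ (x : X))
        (fun γ h => (hfin x).mem_toFinset.2 h)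
      map_add' := by intro x y; ext γ; simp
      map_smul' := by intro a x; ext γ; simp }
  have hTinj : Function.Injective T := by
    intro x y hxy
    have hdiff : ∀ γ ∈ S, φ γ ((x : X) - (y : X)) = 0 := by
      intro γ hγ
      have := DFunLike.congr_fun hxy ⟨γ, hγ⟩
      simp only [T, LinearMap.coe_mk, AddHom.coe_mk, Finsupp.onFinset_apply] at this
      simp [map_sub, this]
    have hmem : (x : X) - (y : X) ∈ Submodule.span ℝ (Set.range v) :=
      Submodule.sub_mem _ (hZ₀ x.2) (hZ₀ y.2)
    have hz : (x : X) - (y : X) ∈ Z₀ := Z₀.sub_mem x.2 y.2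
    have hpsi : ∀ j, ψ j ((x : X) - (y : X)) = 0 := key _ hmem hdiff
    have : (x : X) - (y : X) = 0 := by
      by_contra hne
      obtain ⟨j, hj⟩ := hcon _ hz hne
      exact hj (hpsi j)
    ext
    exact sub_eq_zero.mp this
  -- hence `Z₀` has countable rank
  have hrank : Module.rank ℝ Z₀ ≤ Cardinal.aleph0 := by
    have h1 := T.lift_rank_le_of_injective hTinj
    have h2 : Module.rank ℝ (S →₀ ℝ) ≤ Cardinal.aleph0 := by
      rw [rank_finsupp_self]
      have : Cardinal.mk S ≤ Cardinal.aleph0 := by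
        have := hScount.to_subtype
        exact Cardinal.mk_le_aleph0
      simpa using this
    have h3 : Cardinal.lift.{u} (Module.rank ℝ (S →₀ ℝ)) ≤
        Cardinal.lift.{u} Cardinal.aleph0 := Cardinal.lift_le.2 h2
    have h4 := le_trans h1 h3
    rw [Cardinal.lift_aleph0] at h4
    have h5 : Cardinal.lift.{v} (Module.rank ℝ Z₀) ≤
        Cardinal.lift.{v} Cardinal.aleph0 := by
      rw [Cardinal.lift_aleph0]; exact h4
    exact Cardinal.lift_le.mp h5
  -- a space of countable rank is separable
  apply hns
  let b := Module.Basis.ofVectorSpace ℝ Z₀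
  have hbcount : Countable (Module.Basis.ofVectorSpaceIndex ℝ Z₀) := by
    have hmk : Cardinal.mk (Module.Basis.ofVectorSpaceIndex ℝ Z₀) = Module.rank ℝ Z₀ :=
      b.mk_eq_rank''
    exact Cardinal.mk_le_aleph0_iff.mp (hmk ▸ hrank)
  have hsetZ : (Z₀ : Set X) =
      (Submodule.span ℝ (Z₀.subtype '' Set.range b) : Set X) := by
    rw [← Submodule.map_span, b.span_eq, Submodule.map_subtype_top]
  have hc : (Z₀.subtype '' Set.range b).Countable :=
    ((Set.countable_range b).image _)
  have hsepset : IsSeparable (Z₀ : Set X) := by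
    rw [hsetZ]
    exact hc.isSeparable.span
  exact hsepset.separableSpace
end

section
/- Let X be a real Banach space and let {(e_α, e*_α)}_{α<ω₁} be an M-basis for X with ‖e_α‖ = 1 for every α < ω₁. For each ordinal α with 1 ≤ α < ω₁ let λ_α ∈ (0,1) and let σ_α be a bijection from ω onto [0,α) if α is infinite, and from the set of natural numbers less than the (finite) cardinality of α onto [0,α) if α is finite. Define ẽ_0 := e_0 and, for 1 ≤ α < ω₁, ẽ_α := e_α + Σ_k (λ_α)ᵏ e_{σ_α(k)}, where k ranges over the domain of σ_α (the series converges absolutely when α is infinite). Then span{ẽ_α : α < ω₁} is dense in X; moreover, for every ordinal β ≤ ω₁ the closed linear span of {e_α : α < β} equals the closed linear span of {ẽ_α : α < β}. -/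
open Cardinal Ordinal TopologicalSpace

universe u v

lemma tsum_mem_of_closed {X : Type u} [NormedAddCommGroup X] [NormedSpace ℝ X]
    {M : Submodule ℝ X} (hM : IsClosed (M : Set X)) {g : ℕ → X}
    (hg : Summable g) (h : ∀ n, g n ∈ M) : (∑' n, g n) ∈ M := by
  refine hM.mem_of_tendsto hg.hasSum.tendsto_sum_nat ?_
  exact Filter.Eventually.of_forall fun n => M.sum_mem fun i _ => h i

/-- (Fact 4.2 of the paper.) The perturbed vectors `ẽ_α`, `α < ω₁`, span a
dense subspace; in fact `closure span {e_α : α < β} = closure span {ẽ_α : α < β}` for all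
`β ≤ ω₁`. -/
theorem statement14 {X : Type u} [NormedAddCommGroup X] [NormedSpace ℝ X] [CompleteSpace X]
    (e : {α : Ordinal.{0} // α < (Cardinal.aleph 1).ord} → X)
    (f : {α : Ordinal.{0} // α < (Cardinal.aleph 1).ord} → X →L[ℝ] ℝ)
    (hM : IsMBasis e f) (hnorm : ∀ α, ‖e α‖ = 1)
    (lam : {α : Ordinal.{0} // α < (Cardinal.aleph 1).ord} → ℝ)
    (hlam : ∀ α, 1 ≤ α.1 → lam α ∈ Set.Ioo (0 : ℝ) 1)
    (σ : {α : Ordinal.{0} // α < (Cardinal.aleph 1).ord} → ℕ →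
      {α : Ordinal.{0} // α < (Cardinal.aleph 1).ord})
    (hσinf : ∀ α, Ordinal.omega0 ≤ α.1 →
      Set.BijOn (σ α) Set.univ {β | β.1 < α.1})
    (hσfin : ∀ α (n : ℕ), α.1 = (n : Ordinal.{0}) →
      Set.BijOn (σ α) (Set.Iio n) {β | β.1 < α.1})
    (ebar : {α : Ordinal.{0} // α < (Cardinal.aleph 1).ord} → X)
    (hzero : ∀ α, α.1 = 0 → ebar α = e α)
    (hfin : ∀ α (n : ℕ), 1 ≤ n → α.1 = (n : Ordinal.{0}) →
      ebar α = e α + ∑ k ∈ Finset.range n, lam α ^ k • e (σ α k))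
    (hinf : ∀ α, Ordinal.omega0 ≤ α.1 →
      ebar α = e α + ∑' k : ℕ, lam α ^ k • e (σ α k)) :
    Dense (Submodule.span ℝ (Set.range ebar) : Set X) ∧
    ∀ β : Ordinal.{0}, β ≤ (Cardinal.aleph 1).ord →
      closure (Submodule.span ℝ (e '' {α | α.1 < β}) : Set X) =
      closure (Submodule.span ℝ (ebar '' {α | α.1 < β}) : Set X) := by
  have hsummable : ∀ α, Ordinal.omega0 ≤ α.1 →
      Summable (fun k : ℕ => lam α ^ k • e (σ α k)) := by
    intro α hα
    have hl := hlam α (Ordinal.one_lt_omega0.le.trans hα)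
    refine Summable.of_norm ?_
    have heq : (fun k : ℕ => ‖lam α ^ k • e (σ α k)‖) = fun k => (lam α) ^ k := by
      funext k
      rw [norm_smul, hnorm, mul_one, norm_pow, Real.norm_eq_abs, abs_of_pos hl.1]
    rw [heq]
    exact summable_geometric_of_lt_one hl.1.le hl.2
  set Me : Ordinal.{0} → Submodule ℝ X :=
    fun β => (Submodule.span ℝ (e '' {γ | γ.1 < β})).topologicalClosure with hMe
  set Mb : Ordinal.{0} → Submodule ℝ X :=
    fun β => (Submodule.span ℝ (ebar '' {γ | γ.1 < β})).topologicalClosure with hMb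
  have hememb : ∀ (β : Ordinal.{0}) α, α.1 < β → e α ∈ Me β := fun β α hα =>
    Submodule.le_topologicalClosure _ (Submodule.subset_span ⟨α, hα, rfl⟩)
  have hbmemb : ∀ (β : Ordinal.{0}) α, α.1 < β → ebar α ∈ Mb β := fun β α hα =>
    Submodule.le_topologicalClosure _ (Submodule.subset_span ⟨α, hα, rfl⟩)
  -- Direction 1 : each `ebar α` lies in the closed span of the `e γ`, `γ < β`.
  have h1 : ∀ (β : Ordinal.{0}) α, α.1 < β → ebar α ∈ Me β := by
    intro β α hα
    rcases eq_or_ne α.1 0 with h0 | h0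
    · rw [hzero α h0]; exact hememb β α hα
    rcases lt_or_ge α.1 Ordinal.omega0 with hfin' | hinf'
    · obtain ⟨n, hn⟩ := Ordinal.lt_omega0.mp hfin'
      have h1n : 1 ≤ n := Nat.one_le_iff_ne_zero.mpr (by rintro rfl; exact h0 (by simpa using hn))
      rw [hfin α n h1n hn]
      refine (Me β).add_mem (hememb β α hα) (Submodule.sum_mem _ fun k hk => ?_)
      refine (Me β).smul_mem _ (hememb β _ ?_)
      exact lt_trans ((hσfin α n hn).mapsTo (Finset.mem_range.mp hk)) hα
    · rw [hinf α hinf']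
      refine (Me β).add_mem (hememb β α hα) ?_
      refine tsum_mem_of_closed (Submodule.isClosed_topologicalClosure _)
        (hsummable α hinf') fun k => ?_
      refine (Me β).smul_mem _ (hememb β _ ?_)
      exact lt_trans ((hσinf α hinf').mapsTo (Set.mem_univ k)) hα
  -- Direction 2 : each `e α` lies in the closed span of the `ebar γ`, `γ < β`,
  -- by transfinite induction on `α`.
  have h2 : ∀ (β : Ordinal.{0}) α, α.1 < β → e α ∈ Mb β := by
    intro β
    have key : ∀ (o : Ordinal.{0}), ∀ α, α.1 = o → α.1 < β → e α ∈ Mb β := by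
      intro o
      induction o using Ordinal.induction with
      | h j IH =>
        intro α hαj hαβ
        rcases eq_or_ne α.1 0 with h0 | h0
        · rw [← hzero α h0]; exact hbmemb β α hαβ
        rcases lt_or_ge α.1 Ordinal.omega0 with hfin' | hinf'
        · obtain ⟨n, hn⟩ := Ordinal.lt_omega0.mp hfin'
          have h1n : 1 ≤ n :=
            Nat.one_le_iff_ne_zero.mpr (by rintro rfl; exact h0 (by simpa using hn))
          have hsub : ∀ k, k < n → e (σ α k) ∈ Mb β := by
            intro k hk
            have hlt : (σ α k).1 < α.1 := (hσfin α n hn).mapsTo hk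
            exact IH _ (hαj ▸ hlt) _ rfl (lt_trans hlt hαβ)
          have heq : e α = ebar α - ∑ k ∈ Finset.range n, lam α ^ k • e (σ α k) := by
            rw [hfin α n h1n hn]; abel
          rw [heq]
          refine (Mb β).sub_mem (hbmemb β α hαβ) (Submodule.sum_mem _ fun k hk => ?_)
          exact (Mb β).smul_mem _ (hsub k (Finset.mem_range.mp hk))
        · have hsub : ∀ k : ℕ, e (σ α k) ∈ Mb β := by
            intro k
            have hlt : (σ α k).1 < α.1 := (hσinf α hinf').mapsTo (Set.mem_univ k)
            exact IH _ (hαj ▸ hlt) _ rfl (lt_trans hlt hαβ)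
          have heq : e α = ebar α - ∑' k : ℕ, lam α ^ k • e (σ α k) := by
            rw [hinf α hinf']; abel
          rw [heq]
          refine (Mb β).sub_mem (hbmemb β α hαβ) ?_
          refine tsum_mem_of_closed (Submodule.isClosed_topologicalClosure _)
            (hsummable α hinf') fun k => (Mb β).smul_mem _ (hsub k)
    exact fun α => key α.1 α rfl
  -- closure equality for every `β`
  have hclos : ∀ β : Ordinal.{0},
      closure (Submodule.span ℝ (e '' {α | α.1 < β}) : Set X) =
      closure (Submodule.span ℝ (ebar '' {α | α.1 < β}) : Set X) := by
    intro β
    apply subset_antisymm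
    · refine closure_minimal ?_ (Submodule.isClosed_topologicalClosure _)
      have : Submodule.span ℝ (e '' {α | α.1 < β}) ≤ Mb β := by
        rw [Submodule.span_le]; rintro _ ⟨α, hα, rfl⟩; exact h2 β α hα
      exact fun x hx => this hx
    · refine closure_minimal ?_ (Submodule.isClosed_topologicalClosure _)
      have : Submodule.span ℝ (ebar '' {α | α.1 < β}) ≤ Me β := by
        rw [Submodule.span_le]; rintro _ ⟨α, hα, rfl⟩; exact h1 β α hα
      exact fun x hx => this hx
  have himg : ∀ g : {α : Ordinal.{0} // α < (Cardinal.aleph 1).ord} → X,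
      g '' {α | α.1 < (Cardinal.aleph 1).ord} = Set.range g := by
    intro g
    rw [show {α : {α : Ordinal.{0} // α < (Cardinal.aleph 1).ord} | α.1 < (Cardinal.aleph 1).ord}
        = Set.univ from Set.eq_univ_of_forall fun γ => γ.2, Set.image_univ]
  constructor
  · rw [dense_iff_closure_eq]
    have := hclos (Cardinal.aleph 1).ord
    rw [himg e, himg ebar] at this
    rw [← this, ← dense_iff_closure_eq]
    exact hM.2.1
  · exact fun β _ => hclos β
end
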